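/- arXiv:2007.03937 — 7 statements merged into one kernel-verified Lean document; each statement's English description precedes it below -/
import Mathlib

section
/- If 𝔼[|η(X^x_m) − η(x)|] → 0 as m → ∞, then x is a Lebesgue point for η with respect to ℙ_X. -/
/-!
On the event that `X i` is the only one of `X 0, …, X (m-1)` in the ball `B̄_r(x)`, it is the
nearest neighbour of `x`. By independence, weighting these disjoint events by
`|η (X i) - η x|` gives
`m (1 - μ B̄_r)^(m-1) ∫_{B̄_r} |η - η x| dμ ≤ 𝔼 |η (NN m) - η x|`.
If `x` is not an atom, `μ B̄_r → 0`, and `m ≈ 1 / (2 μ B̄_r)` makes the factor in front at least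
`1 / (4 μ B̄_r)`, so the Lebesgue ratio is at most `4 𝔼 |η (NN m) - η x|` with `m → ∞`.
If `x` is an atom, the denominator stays above `μ {x} > 0` while the numerator only sees the
punctured ball, whose measure tends to `0`.
-/

open MeasureTheory Filter Topology
open ProbabilityTheory Finset
open scoped ENNReal

lemma inv_four_mul_le_ceil_mul_one_sub_pow {q : ℝ} (hq0 : 0 < q) (hq1 : q ≤ 1) :
    (4 * q)⁻¹ ≤ ⌈q⁻¹ / 2⌉₊ * (1 - q) ^ (⌈q⁻¹ / 2⌉₊ - 1) := by
  set m := ⌈q⁻¹ / 2⌉₊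
  have hm_ge : q⁻¹ / 2 ≤ m := Nat.le_ceil _
  have hm_lt : (m : ℝ) < q⁻¹ / 2 + 1 := Nat.ceil_lt_add_one (by positivity)
  have hm1 : 1 ≤ m := Nat.one_le_iff_ne_zero.2 (Nat.ceil_pos.2 (by positivity)).ne'
  -- Bernoulli's inequality, with `(m - 1) q < 1 / 2` by the choice of `m`
  have hhalf : 1 / 2 ≤ (1 - q) ^ (m - 1) := by
    have hbern := one_add_mul_le_pow (show (-2 : ℝ) ≤ -q by linarith) (m - 1)
    rw [Nat.cast_sub hm1, Nat.cast_one, ← sub_eq_add_neg] at hbern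
    have : ((m : ℝ) - 1) * q < q⁻¹ / 2 * q := by gcongr; linarith
    rw [div_mul_eq_mul_div, inv_mul_cancel₀ hq0.ne'] at this
    linarith
  calc (4 * q)⁻¹ = q⁻¹ / 2 * (1 / 2) := by field_simp; ring
    _ ≤ m * (1 - q) ^ (m - 1) := mul_le_mul hm_ge hhalf (by norm_num) (by positivity)

lemma tendsto_div_of_forall_mul_one_sub_pow_mul_le {α : Type*} {l : Filter α} {N q : α → ℝ}
    {E : ℕ → ℝ} (hE : Tendsto E atTop (𝓝 0)) (hq : Tendsto q l (𝓝[>] 0))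
    (hq1 : ∀ r, q r ≤ 1) (hN : ∀ r, 0 ≤ N r)
    (hNE : ∀ r, ∀ m, 1 ≤ m → m * (1 - q r) ^ (m - 1) * N r ≤ E m) :
    Tendsto (fun r => N r / q r) l (𝓝 0) := by
  set m : α → ℕ := fun r => ⌈(q r)⁻¹ / 2⌉₊
  have hm : Tendsto m l atTop :=
    tendsto_nat_ceil_atTop.comp ((tendsto_inv_nhdsGT_zero.comp hq).atTop_div_const two_pos)
  have hq0 : ∀ᶠ r in l, 0 < q r := hq self_mem_nhdsWithin
  have hupper : ∀ᶠ r in l, N r / q r ≤ 4 * E (m r) := by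
    filter_upwards [hq0] with r hr
    have hm1 : 1 ≤ m r := Nat.one_le_iff_ne_zero.2 (Nat.ceil_pos.2 (by positivity)).ne'
    calc N r / q r = 4 * ((4 * q r)⁻¹ * N r) := by field_simp
      _ ≤ 4 * (m r * (1 - q r) ^ (m r - 1) * N r) := by
        gcongr
        · exact hN r
        · exact inv_four_mul_le_ceil_mul_one_sub_pow hr (hq1 r)
      _ ≤ 4 * E (m r) := by gcongr; exact hNE r _ hm1
  have hlim : Tendsto (fun r => 4 * E (m r)) l (𝓝 0) := by
    simpa using (hE.comp hm).const_mul 4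
  exact tendsto_of_tendsto_of_tendsto_of_le_of_le' tendsto_const_nhds hlim
    (by filter_upwards [hq0] with r hr using div_nonneg (hN r) hr.le) hupper

lemma sum_indicator_mul_prod_indicator_compl_le {𝒳 : Type*} {s : Set 𝒳} {f : 𝒳 → ℝ≥0∞}
    {m : ℕ} (z : ℕ → 𝒳) (y : 𝒳)
    (hy : ∀ i < m, z i ∈ s → (∀ j < m, j ≠ i → z j ∉ s) → y = z i) :
    ∑ i ∈ range m, s.indicator f (z i) * ∏ j ∈ (range m).erase i, sᶜ.indicator 1 (z j)
      ≤ f y := by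
  by_cases hunique : ∃ i < m, z i ∈ s ∧ ∀ j < m, j ≠ i → z j ∉ s
  · obtain ⟨i, hi, hzi, hothers⟩ := hunique
    rw [sum_eq_single_of_mem i (mem_range.2 hi)]
    · have hprod : ∏ j ∈ (range m).erase i, sᶜ.indicator 1 (z j) = (1 : ℝ≥0∞) :=
        prod_eq_one fun j hj => Set.indicator_of_mem
          (hothers j (mem_range.1 (mem_of_mem_erase hj)) (ne_of_mem_erase hj)) _
      rw [Set.indicator_of_mem hzi, hprod, mul_one, hy i hi hzi hothers]
    · intro k hk hki
      rw [Set.indicator_of_notMem (hothers k (mem_range.1 hk) hki), zero_mul]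
  · push Not at hunique
    refine (sum_eq_zero fun i hi => ?_).trans_le zero_le
    by_cases hzi : z i ∈ s
    · obtain ⟨j, hj, hji, hzj⟩ := hunique i (mem_range.1 hi) hzi
      exact mul_eq_zero_of_right _ <| prod_eq_zero (mem_erase.2 ⟨hji, mem_range.2 hj⟩)
        (Set.indicator_of_notMem (Set.notMem_compl_iff.2 hzj) _)
    · rw [Set.indicator_of_notMem hzi, zero_mul]

section UniqueSampleInSet

variable {Ω 𝒳 : Type*} {mΩ : MeasurableSpace Ω} [MeasurableSpace 𝒳] {P : Measure Ω}
  {X : ℕ → Ω → 𝒳} {μ : Measure 𝒳} {s : Set 𝒳} {f : 𝒳 → ℝ≥0∞} {m : ℕ}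

lemma lintegral_indicator_mul_prod_indicator_compl (hXmeas : ∀ i, Measurable (X i))
    (hXindep : iIndepFun X P) (hXdist : ∀ i, P.map (X i) = μ) (hs : MeasurableSet s)
    (hf : Measurable f) {i : ℕ} (hi : i < m) :
    ∫⁻ ω, s.indicator f (X i ω) * ∏ j ∈ (range m).erase i, sᶜ.indicator 1 (X j ω) ∂P
      = (∫⁻ y in s, f y ∂μ) * μ sᶜ ^ (m - 1) := by
  set φ : ℕ → 𝒳 → ℝ≥0∞ := fun j => if j = i then s.indicator f else sᶜ.indicator 1
  have hφ : ∀ j, Measurable (φ j) := fun j => by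
    by_cases hj : j = i
    · simpa [φ, hj] using hf.indicator hs
    · simpa [φ, hj] using measurable_one.indicator hs.compl
  have hsplit : ∀ g : ℕ → ℝ≥0∞,
      ∏ j ∈ range m, g j = g i * ∏ j ∈ (range m).erase i, g j :=
    fun g => (mul_prod_erase _ _ (mem_range.2 hi)).symm
  have herase : ∀ a : ℕ → 𝒳, ∏ j ∈ (range m).erase i, φ j (a j)
      = ∏ j ∈ (range m).erase i, sᶜ.indicator 1 (a j) :=
    fun a => prod_congr rfl fun j hj => by simp [φ, ne_of_mem_erase hj]
  have hlaw : ∀ j, ∫⁻ ω, φ j (X j ω) ∂P = ∫⁻ y, φ j y ∂μ := fun j => by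
    rw [← hXdist j, lintegral_map (hφ j) (hXmeas j)]
  calc ∫⁻ ω, s.indicator f (X i ω) * ∏ j ∈ (range m).erase i, sᶜ.indicator 1 (X j ω) ∂P
      = ∫⁻ ω, ∏ j ∈ range m, φ j (X j ω) ∂P := by
        simp_rw [hsplit, herase (X · _)]; simp [φ]
    _ = ∏ j ∈ range m, ∫⁻ y, φ j y ∂μ := by
        rw [lintegral_prod_eq_prod_lintegral_of_indepFun _ (fun j ω => φ j (X j ω))
          (hXindep.comp φ hφ) fun j => (hφ j).comp (hXmeas j)]
        exact prod_congr rfl fun j _ => hlaw j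
    _ = (∫⁻ y in s, f y ∂μ) * μ sᶜ ^ (m - 1) := by
        rw [hsplit, prod_congr rfl (g := fun _ => μ sᶜ) fun j hj => ?_, prod_const,
          card_erase_of_mem (mem_range.2 hi), card_range]
        · simp [φ, lintegral_indicator hs]
        · simp [φ, ne_of_mem_erase hj, lintegral_indicator_one hs.compl]

theorem mul_pow_mul_setLIntegral_le_lintegral (hXmeas : ∀ i, Measurable (X i))
    (hXindep : iIndepFun X P) (hXdist : ∀ i, P.map (X i) = μ) (hs : MeasurableSet s)
    (hf : Measurable f) (Y : Ω → 𝒳)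
    (hY : ∀ ω, ∀ i < m, X i ω ∈ s → (∀ j < m, j ≠ i → X j ω ∉ s) → Y ω = X i ω) :
    m * μ sᶜ ^ (m - 1) * ∫⁻ y in s, f y ∂μ ≤ ∫⁻ ω, f (Y ω) ∂P := by
  have hweight : ∀ i, Measurable fun ω =>
      s.indicator f (X i ω) * ∏ j ∈ (range m).erase i, sᶜ.indicator 1 (X j ω) := fun i =>
    ((hf.indicator hs).comp (hXmeas i)).mul <|
      Finset.measurable_prod _ fun j _ => (measurable_one.indicator hs.compl).comp (hXmeas j)
  calc m * μ sᶜ ^ (m - 1) * ∫⁻ y in s, f y ∂μ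
      = ∑ i ∈ range m, ∫⁻ ω,
          s.indicator f (X i ω) * ∏ j ∈ (range m).erase i, sᶜ.indicator 1 (X j ω) ∂P := by
        rw [sum_congr rfl fun i hi => lintegral_indicator_mul_prod_indicator_compl hXmeas
          hXindep hXdist hs hf (mem_range.1 hi), sum_const, card_range, nsmul_eq_mul]
        ring
    _ = ∫⁻ ω, ∑ i ∈ range m,
          s.indicator f (X i ω) * ∏ j ∈ (range m).erase i, sᶜ.indicator 1 (X j ω) ∂P :=
        (lintegral_finsetSum _ fun i _ => hweight i).symm
    _ ≤ ∫⁻ ω, f (Y ω) ∂P :=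
        lintegral_mono fun ω => sum_indicator_mul_prod_indicator_compl_le _ _ (hY ω)

end UniqueSampleInSet

def IsNearestNeighbor {𝒳 : Type*} [PseudoMetricSpace 𝒳] (x : 𝒳) (z : ℕ → 𝒳) (m : ℕ) (y : 𝒳) :
    Prop :=
  (∃ i < m, y = z i) ∧ ∀ j < m, dist x y ≤ dist x (z j)

lemma IsNearestNeighbor.eq_of_mem_closedBall {𝒳 : Type*} [PseudoMetricSpace 𝒳] {x y : 𝒳}
    {z : ℕ → 𝒳} {m i : ℕ} {r : ℝ} (h : IsNearestNeighbor x z m y) (hi : i < m)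
    (hzi : z i ∈ Metric.closedBall x r) (hothers : ∀ j < m, j ≠ i → z j ∉ Metric.closedBall x r) :
    y = z i := by
  obtain ⟨⟨k, hk, rfl⟩, hmin⟩ := h
  rcases eq_or_ne k i with rfl | hki
  · rfl
  · exact absurd (Metric.mem_closedBall'.2 ((hmin i hi).trans (Metric.mem_closedBall'.2 hzi)))
      (hothers k hk hki)

theorem mul_pow_mul_setIntegral_closedBall_le {Ω 𝒳 : Type*} {mΩ : MeasurableSpace Ω}
    [PseudoMetricSpace 𝒳] [MeasurableSpace 𝒳] [OpensMeasurableSpace 𝒳] {P : Measure Ω}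
    [IsFiniteMeasure P] {X : ℕ → Ω → 𝒳} {μ : Measure 𝒳} [IsProbabilityMeasure μ]
    (hXmeas : ∀ i, Measurable (X i)) (hXindep : iIndepFun X P) (hXdist : ∀ i, P.map (X i) = μ)
    {g : 𝒳 → ℝ} (hg : Measurable g) (hg0 : ∀ y, 0 ≤ g y) {B : ℝ} (hgB : ∀ y, g y ≤ B)
    {x : 𝒳} {r : ℝ} {m : ℕ} {Y : Ω → 𝒳} (hYmeas : Measurable Y)
    (hY : ∀ ω, IsNearestNeighbor x (X · ω) m (Y ω)) :
    m * (1 - μ.real (Metric.closedBall x r)) ^ (m - 1) * ∫ y in Metric.closedBall x r, g y ∂μ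
      ≤ ∫ ω, g (Y ω) ∂P := by
  have hs : MeasurableSet (Metric.closedBall x r) := measurableSet_closedBall
  have hbound : ∀ y, ‖g y‖ ≤ B := fun y => by rw [Real.norm_of_nonneg (hg0 y)]; exact hgB y
  have hgμ : Integrable g μ := .of_bound hg.aestronglyMeasurable B (ae_of_all _ hbound)
  have hgY : Integrable (fun ω => g (Y ω)) P :=
    .of_bound (hg.comp hYmeas).aestronglyMeasurable B (ae_of_all _ fun ω => hbound (Y ω))
  have key := mul_pow_mul_setLIntegral_le_lintegral hXmeas hXindep hXdist hs
    hg.ennreal_ofReal Y fun ω _ hi => (hY ω).eq_of_mem_closedBall hi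
  rw [← ofReal_integral_eq_lintegral_ofReal hgμ.integrableOn (ae_of_all _ hg0),
    ← ofReal_integral_eq_lintegral_ofReal hgY (ae_of_all _ fun ω => hg0 (Y ω)),
    ← ofReal_measureReal, probReal_compl_eq_one_sub hs,
    ← ENNReal.ofReal_pow (sub_nonneg.2 measureReal_le_one), ← ENNReal.ofReal_natCast,
    ← ENNReal.ofReal_mul (Nat.cast_nonneg m), ← ENNReal.ofReal_mul
      (mul_nonneg (Nat.cast_nonneg m) (pow_nonneg (sub_nonneg.2 measureReal_le_one) _)),
    ENNReal.ofReal_le_ofReal_iff (integral_nonneg fun ω => hg0 (Y ω))] at key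
  exact key

lemma tendsto_measureReal_closedBall {𝒳 : Type*} [MetricSpace 𝒳] [MeasurableSpace 𝒳]
    [OpensMeasurableSpace 𝒳] (μ : Measure 𝒳) [IsFiniteMeasure μ] (x : 𝒳) :
    Tendsto (fun r => μ.real (Metric.closedBall x r)) (𝓝[>] 0) (𝓝 (μ.real {x})) := by
  have h := tendsto_measure_cthickening_of_isClosed (μ := μ) ⟨1, one_pos, measure_ne_top _ _⟩
    (isClosed_singleton (x := x))
  refine ((ENNReal.tendsto_toReal (measure_ne_top _ _)).comp
    (h.mono_left nhdsWithin_le_nhds)).congr' ?_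
  filter_upwards [self_mem_nhdsWithin] with r hr
  simp [Measure.real, Metric.cthickening_singleton x (le_of_lt hr)]

lemma tendsto_setIntegral_closedBall_div_of_measure_singleton_ne_zero {𝒳 : Type*}
    [MetricSpace 𝒳] [MeasurableSpace 𝒳] [OpensMeasurableSpace 𝒳] {μ : Measure 𝒳}
    [IsFiniteMeasure μ] {x : 𝒳} (hx : μ {x} ≠ 0) {f : 𝒳 → ℝ} (hf0 : ∀ y, 0 ≤ f y) {B : ℝ}
    (hfB : ∀ y, f y ≤ B) (hfx : f x = 0) :
    Tendsto (fun r => (∫ y in Metric.closedBall x r, f y ∂μ) / μ.real (Metric.closedBall x r))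
      (𝓝[>] 0) (𝓝 0) := by
  have hc : μ.real {x} ≠ 0 := (ENNReal.toReal_pos hx (measure_ne_top _ _)).ne'
  have hq := tendsto_measureReal_closedBall μ x
  have hlim : Tendsto (fun r => B * (μ.real (Metric.closedBall x r) - μ.real {x}) /
      μ.real (Metric.closedBall x r)) (𝓝[>] 0) (𝓝 0) := by
    have := ((hq.sub_const (μ.real {x})).const_mul B).div hq hc
    rwa [sub_self, mul_zero, zero_div] at this
  refine tendsto_of_tendsto_of_tendsto_of_le_of_le' tendsto_const_nhds hlim ?_ ?_
  · exact Eventually.of_forall fun r =>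
      div_nonneg (setIntegral_nonneg measurableSet_closedBall fun y _ => hf0 y) measureReal_nonneg
  · filter_upwards [self_mem_nhdsWithin] with r hr
    have hx_mem : x ∈ Metric.closedBall x r := Metric.mem_closedBall_self (le_of_lt hr)
    have hpunct : ∫ y in Metric.closedBall x r, f y ∂μ
        = ∫ y in Metric.closedBall x r \ {x}, f y ∂μ :=
      setIntegral_eq_of_subset_of_forall_sdiff_eq_zero measurableSet_closedBall
        Set.sdiff_subset fun y hy => by simp_all
    gcongr
    rw [hpunct, ← measureReal_sdiff (Set.singleton_subset_iff.2 hx_mem)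
      (measurableSet_singleton x)]
    exact (le_abs_self _).trans <| norm_setIntegral_le_of_norm_le_const (measure_lt_top _ _)
      fun y _ => by rw [Real.norm_of_nonneg (hf0 y)]; exact hfB y

/-- **Theorem (NN ⟹ Lebesgue).**
Setting: `(𝒳, d)` a metric space, `(Ω, ℱ, P)` a probability space, `X 0, X 1, …`
i.i.d. `𝒳`-valued random variables with common distribution `μ` (the law of the generic
sample `X`), `x` a point of the support of `μ`, `η` a bounded measurable function, and,
for every `m ≥ 1`, `NN m` a nearest neighbor of `x` among `X 0, …, X (m-1)`.
If `𝔼[|η(NN m) − η(x)|] → 0` as `m → ∞`, then `x` is a Lebesgue point for `η`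
with respect to the common distribution `μ`. -/
theorem stmt_0
    {𝒳 Ω : Type*} [MetricSpace 𝒳] [MeasurableSpace 𝒳] [BorelSpace 𝒳]
    {mΩ : MeasurableSpace Ω} (P : Measure Ω) [IsProbabilityMeasure P]
    (X : ℕ → Ω → 𝒳) (μ : Measure 𝒳)
    (hXmeas : ∀ i, Measurable (X i))
    (hXindep : ProbabilityTheory.iIndepFun X P)
    (hXdist : ∀ i, P.map (X i) = μ)
    (x : 𝒳) (hsupp : ∀ r > (0 : ℝ), 0 < μ (Metric.closedBall x r))
    (η : 𝒳 → ℝ) (hηmeas : Measurable η) (C : ℝ) (hηbdd : ∀ y, |η y| ≤ C)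
    (NN : ℕ → Ω → 𝒳)
    (hNNmeas : ∀ m, 1 ≤ m → Measurable (NN m))
    (hNN : ∀ m, 1 ≤ m → ∀ ω, (∃ i < m, NN m ω = X i ω) ∧
      ∀ j < m, dist x (NN m ω) ≤ dist x (X j ω))
    (hconv : Tendsto (fun m : ℕ => ∫ ω, |η (NN m ω) - η x| ∂P) atTop (𝓝 0)) :
    Tendsto
      (fun r : ℝ =>
        (∫ y in Metric.closedBall x r, |η y - η x| ∂μ) /
          (μ (Metric.closedBall x r)).toReal)
      (𝓝[>] 0) (𝓝 0) := by
  have : IsProbabilityMeasure μ :=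
    hXdist 0 ▸ Measure.isProbabilityMeasure_map (hXmeas 0).aemeasurable
  have hf : Measurable fun y => |η y - η x| := (hηmeas.sub measurable_const).abs
  have hf0 : ∀ y, 0 ≤ |η y - η x| := fun y => abs_nonneg _
  have hfB : ∀ y, |η y - η x| ≤ 2 * C := fun y =>
    (abs_sub _ _).trans (by linarith [hηbdd y, hηbdd x])
  by_cases hatom : μ {x} = 0
  · have hball : Tendsto (fun r => μ.real (Metric.closedBall x r)) (𝓝[>] 0) (𝓝[>] 0) := by
      refine tendsto_nhdsWithin_iff.2 ⟨?_, eventually_nhdsWithin_of_forall fun r hr =>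
        ENNReal.toReal_pos (hsupp r hr).ne' (measure_ne_top _ _)⟩
      simpa [Measure.real, hatom] using tendsto_measureReal_closedBall μ x
    exact tendsto_div_of_forall_mul_one_sub_pow_mul_le hconv hball (fun _ => measureReal_le_one)
      (fun _ => setIntegral_nonneg measurableSet_closedBall fun y _ => hf0 y)
      fun _ m hm => mul_pow_mul_setIntegral_closedBall_le hXmeas hXindep hXdist hf hf0 hfB
        (hNNmeas m hm) (hNN m hm)
  · exact tendsto_setIntegral_closedBall_div_of_measure_singleton_ne_zero hatom hf0 hfB
      (by simp)
end

section
/- If either (i) ℙ(X = x) > 0, or (ii) there exists r > 0 such that 𝔼[𝟙_{B̄_r}(X)·|η(X) − η(x)|] = 0, then 𝔼[|η(X^x_m) − η(x)|] → 0 as m → ∞. -/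
/-!
Put `N := B̄_r(x) ∩ {η ≠ η(x)}`, where `r = 0` in case (i) (so that `B̄_0(x) = {x}` and `N = ∅`)
and `r` is the given radius in case (ii). In both cases `μ(B̄_r(x)) > 0` and `μ(N) = 0`.
Almost surely no sample lies in `N`, so as soon as one of `X₀, …, X_{m-1}` lies in `B̄_r(x)`,
the nearest neighbor is a sample in `B̄_r(x) \ N`, where `η = η(x)`. The error is therefore
bounded by `2C` times the probability `μ(B̄_r(x)ᶜ)^m` that no sample hits the ball, which
tends to `0`.
-/

open MeasureTheory Filter Topology Metric

section IID

variable {Ω 𝒳 : Type*} {mΩ : MeasurableSpace Ω} [MeasurableSpace 𝒳] {P : Measure Ω}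
  {X : ℕ → Ω → 𝒳} {μ : Measure 𝒳}

lemma measure_iInter_range_preimage_eq_pow (hXmeas : ∀ i, Measurable (X i))
    (hXindep : ProbabilityTheory.iIndepFun X P) (hXdist : ∀ i, P.map (X i) = μ)
    {S : Set 𝒳} (hS : MeasurableSet S) (m : ℕ) :
    P (⋂ i ∈ Finset.range m, X i ⁻¹' S) = μ S ^ m := by
  rw [hXindep.meas_biInter fun i _ => ⟨S, hS, rfl⟩]
  simp_rw [← Measure.map_apply (hXmeas _) hS, hXdist, Finset.prod_const, Finset.card_range]

lemma tendsto_measure_iInter_range_preimage_compl [IsZeroOrProbabilityMeasure μ]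
    (hXmeas : ∀ i, Measurable (X i)) (hXindep : ProbabilityTheory.iIndepFun X P)
    (hXdist : ∀ i, P.map (X i) = μ) {A : Set 𝒳} (hA : MeasurableSet A) (hApos : 0 < μ A) :
    Tendsto (fun m => P (⋂ i ∈ Finset.range m, X i ⁻¹' Aᶜ)) atTop (𝓝 0) := by
  simp_rw [measure_iInter_range_preimage_eq_pow hXmeas hXindep hXdist hA.compl]
  refine ENNReal.tendsto_pow_atTop_nhds_zero_of_lt_one ?_
  simpa using prob_compl_lt_one_sub_of_lt_prob hApos hA

lemma ae_forall_notMem_of_measure_eq_zero (hXmeas : ∀ i, Measurable (X i))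
    (hXdist : ∀ i, P.map (X i) = μ) {N : Set 𝒳} (hN : MeasurableSet N) (hN0 : μ N = 0) :
    ∀ᵐ ω ∂P, ∀ i, X i ω ∉ N := by
  refine ae_all_iff.2 fun i => ?_
  rw [← hXdist i] at hN0
  exact ae_map_iff (hXmeas i).aemeasurable hN.compl |>.1 (measure_eq_zero_iff_ae_notMem.1 hN0)

end IID

lemma tendsto_integral_of_ae_eq_zero_off {Ω F : Type*} {mΩ : MeasurableSpace Ω}
    [NormedAddCommGroup F] [NormedSpace ℝ F] {P : Measure Ω} [IsFiniteMeasure P]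
    {f : ℕ → Ω → F} {E : ℕ → Set Ω} {B : ℝ} (hbdd : ∀ m ω, ‖f m ω‖ ≤ B)
    (hzero : ∀ᶠ m in atTop, ∀ᵐ ω ∂P, ω ∉ E m → f m ω = 0)
    (hE : Tendsto (fun m => P (E m)) atTop (𝓝 0)) :
    Tendsto (fun m => ∫ ω, f m ω ∂P) atTop (𝓝 0) := by
  have hEreal : Tendsto (fun m => B * P.real (E m)) atTop (𝓝 0) := by
    simpa [Measure.real] using (ENNReal.tendsto_toReal ENNReal.zero_ne_top |>.comp hE).const_mul B
  refine squeeze_zero_norm' ?_ hEreal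
  filter_upwards [hzero] with m hm
  rw [← setIntegral_eq_integral_of_ae_compl_eq_zero hm]
  exact norm_setIntegral_le_of_norm_le_const (measure_lt_top _ _) fun ω _ => hbdd m ω

lemma measure_inter_ne_eq_zero_of_setIntegral_abs_sub_eq_zero {𝒳 : Type*} [MeasurableSpace 𝒳]
    {μ : Measure 𝒳} {s : Set 𝒳} (hs : MeasurableSet s) {η : 𝒳 → ℝ} {c : ℝ}
    (hint : IntegrableOn (fun y => |η y - c|) s μ) (h0 : ∫ y in s, |η y - c| ∂μ = 0) :
    μ (s ∩ {y | η y ≠ c}) = 0 := by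
  have hae := (integral_eq_zero_iff_of_nonneg (fun y => abs_nonneg _) hint).1 h0
  rw [Set.inter_comm, ← Measure.restrict_apply' hs]
  simpa [sub_eq_zero] using ae_iff.1 hae

lemma abs_sub_le_two_mul_of_abs_le {α : Type*} {η : α → ℝ} {C : ℝ} (hη : ∀ y, |η y| ≤ C)
    (a b : α) : |η a - η b| ≤ 2 * C :=
  (abs_sub _ _).trans (two_mul C ▸ add_le_add (hη a) (hη b))

section NearestNeighbor

variable {𝒳 Ω : Type*} [MetricSpace 𝒳] {X : ℕ → Ω → 𝒳} {NN : ℕ → Ω → 𝒳} {x : 𝒳} {m : ℕ}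
  {ω : Ω}

lemma nearestNeighbor_mem_closedBall
    (hnearest : ∀ j < m, dist x (NN m ω) ≤ dist x (X j ω)) {r : ℝ}
    (hhit : ∃ i < m, X i ω ∈ closedBall x r) : NN m ω ∈ closedBall x r := by
  obtain ⟨i, him, hi⟩ := hhit
  rw [mem_closedBall, dist_comm] at hi ⊢
  exact (hnearest i him).trans hi

lemma apply_nearestNeighbor_eq {η : 𝒳 → ℝ} {r : ℝ}
    (hsample : ∃ i < m, NN m ω = X i ω)
    (hnearest : ∀ j < m, dist x (NN m ω) ≤ dist x (X j ω))
    (hhit : ∃ i < m, X i ω ∈ closedBall x r)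
    (hmiss : ∀ i, X i ω ∉ closedBall x r ∩ {y | η y ≠ η x}) :
    η (NN m ω) = η x := by
  obtain ⟨j, -, hj⟩ := hsample
  by_contra hne
  exact hmiss j (hj ▸ ⟨nearestNeighbor_mem_closedBall hnearest hhit, hne⟩)

end NearestNeighbor

theorem tendsto_integral_abs_sub_nearestNeighbor_of_closedBall
    {𝒳 Ω : Type*} [MetricSpace 𝒳] [MeasurableSpace 𝒳] [BorelSpace 𝒳]
    {mΩ : MeasurableSpace Ω} {P : Measure Ω} [IsProbabilityMeasure P]
    {X : ℕ → Ω → 𝒳} {μ : Measure 𝒳} (hXmeas : ∀ i, Measurable (X i))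
    (hXindep : ProbabilityTheory.iIndepFun X P) (hXdist : ∀ i, P.map (X i) = μ)
    {x : 𝒳} {η : 𝒳 → ℝ} (hηmeas : Measurable η) {C : ℝ} (hηbdd : ∀ y, |η y| ≤ C)
    {NN : ℕ → Ω → 𝒳}
    (hNN : ∀ m, 1 ≤ m → ∀ ω, (∃ i < m, NN m ω = X i ω) ∧
      ∀ j < m, dist x (NN m ω) ≤ dist x (X j ω))
    {r : ℝ} (hball : 0 < μ (closedBall x r))
    (hnull : μ (closedBall x r ∩ {y | η y ≠ η x}) = 0) :
    Tendsto (fun m : ℕ => ∫ ω, |η (NN m ω) - η x| ∂P) atTop (𝓝 0) := by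
  have : IsZeroOrProbabilityMeasure μ := hXdist 0 ▸ inferInstance
  have hN : MeasurableSet (closedBall x r ∩ {y | η y ≠ η x}) :=
    measurableSet_closedBall.inter (hηmeas (measurableSet_singleton _)).compl
  have hmiss := ae_forall_notMem_of_measure_eq_zero hXmeas hXdist hN hnull
  refine tendsto_integral_of_ae_eq_zero_off (B := 2 * C) (fun m ω => ?_) ?_
    (tendsto_measure_iInter_range_preimage_compl hXmeas hXindep hXdist
      measurableSet_closedBall hball)
  · rw [Real.norm_eq_abs, abs_abs]
    exact abs_sub_le_two_mul_of_abs_le hηbdd _ _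
  · filter_upwards [eventually_ge_atTop 1] with m hm
    filter_upwards [hmiss] with ω hω hhit
    simp only [Set.mem_iInter, Set.mem_preimage, Set.mem_compl_iff, not_forall, not_not,
      Finset.mem_range, exists_prop] at hhit
    rw [apply_nearestNeighbor_eq (hNN m hm ω).1 (hNN m hm ω).2 hhit hω, sub_self, abs_zero]

theorem stmt_1_general
    {𝒳 Ω : Type*} [MetricSpace 𝒳] [MeasurableSpace 𝒳] [BorelSpace 𝒳]
    {mΩ : MeasurableSpace Ω} (P : Measure Ω) [IsProbabilityMeasure P]
    (X : ℕ → Ω → 𝒳) (μ : Measure 𝒳)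
    (hXmeas : ∀ i, Measurable (X i))
    (hXindep : ProbabilityTheory.iIndepFun X P)
    (hXdist : ∀ i, P.map (X i) = μ)
    (x : 𝒳) (hsupp : ∀ r > (0 : ℝ), 0 < μ (Metric.closedBall x r))
    (η : 𝒳 → ℝ) (hηmeas : Measurable η) (C : ℝ) (hηbdd : ∀ y, |η y| ≤ C)
    (NN : ℕ → Ω → 𝒳)
    (hNN : ∀ m, 1 ≤ m → ∀ ω, (∃ i < m, NN m ω = X i ω) ∧
      ∀ j < m, dist x (NN m ω) ≤ dist x (X j ω))
    (htriv : 0 < μ {x} ∨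
      ∃ r > (0 : ℝ), (∫ y in Metric.closedBall x r, |η y - η x| ∂μ) = 0) :
    Tendsto (fun m : ℕ => ∫ ω, |η (NN m ω) - η x| ∂P) atTop (𝓝 0) := by
  have : IsProbabilityMeasure μ :=
    hXdist 0 ▸ Measure.isProbabilityMeasure_map (hXmeas 0).aemeasurable
  obtain ⟨r, hball, hnull⟩ : ∃ r : ℝ, 0 < μ (closedBall x r) ∧
      μ (closedBall x r ∩ {y | η y ≠ η x}) = 0 := by
    rcases htriv with hx | ⟨r, hr, h0⟩
    · refine ⟨0, by rwa [closedBall_zero], ?_⟩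
      simp [closedBall_zero]
    · refine ⟨r, hsupp r hr, measure_inter_ne_eq_zero_of_setIntegral_abs_sub_eq_zero
        measurableSet_closedBall ?_ h0⟩
      refine Integrable.of_bound (C := 2 * C)
        (hηmeas.sub measurable_const).abs.aestronglyMeasurable (ae_of_all _ fun y => ?_)
      rw [Real.norm_eq_abs, abs_abs]
      exact abs_sub_le_two_mul_of_abs_le hηbdd _ _
  exact tendsto_integral_abs_sub_nearestNeighbor_of_closedBall hXmeas hXindep hXdist hηmeas
    hηbdd hNN hball hnull

/-- **Lemma (trivial cases).**
In the nearest-neighbor setting, if either (i) `ℙ(X = x) > 0` (i.e. `μ {x} > 0` for the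
common distribution `μ`), or (ii) there is `r > 0` with
`𝔼[𝟙_{B̄_r}(X)·|η(X) − η(x)|] = 0`, then `𝔼[|η(NN m) − η(x)|] → 0` as `m → ∞`. -/
theorem stmt_1
    {𝒳 Ω : Type*} [MetricSpace 𝒳] [MeasurableSpace 𝒳] [BorelSpace 𝒳]
    {mΩ : MeasurableSpace Ω} (P : Measure Ω) [IsProbabilityMeasure P]
    (X : ℕ → Ω → 𝒳) (μ : Measure 𝒳)
    (hXmeas : ∀ i, Measurable (X i))
    (hXindep : ProbabilityTheory.iIndepFun X P)
    (hXdist : ∀ i, P.map (X i) = μ)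
    (x : 𝒳) (hsupp : ∀ r > (0 : ℝ), 0 < μ (Metric.closedBall x r))
    (η : 𝒳 → ℝ) (hηmeas : Measurable η) (C : ℝ) (hηbdd : ∀ y, |η y| ≤ C)
    (NN : ℕ → Ω → 𝒳)
    (hNNmeas : ∀ m, 1 ≤ m → Measurable (NN m))
    (hNN : ∀ m, 1 ≤ m → ∀ ω, (∃ i < m, NN m ω = X i ω) ∧
      ∀ j < m, dist x (NN m ω) ≤ dist x (X j ω))
    (htriv : 0 < μ {x} ∨
      ∃ r > (0 : ℝ), (∫ y in Metric.closedBall x r, |η y - η x| ∂μ) = 0) :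
    Tendsto (fun m : ℕ => ∫ ω, |η (NN m ω) - η x| ∂P) atTop (𝓝 0) :=
  stmt_1_general (mΩ := mΩ) P X μ hXmeas hXindep hXdist x hsupp η hηmeas C hηbdd NN hNN htriv
end

section
/- For every α ∈ (0,1), the α-sequence (r_m)_{m ≥ m₁} is a well-defined vanishing sequence of strictly positive real numbers, and for every m ∈ ℕ with m ≥ m₁ one has both: m ≤ (1 / 𝔼[𝟙_{B_{r_m}}(X)·|η(X) − η(x)|]) · (𝔼[𝟙_{B_{r_m}}(X)·|η(X) − η(x)|] / ℙ_X(B_{r_m}))^{1−α}, where the balls B_{r_m} are open, and m ≥ (1 / ℙ_X(B̄_{r_m})) · (𝔼[𝟙_{B̄_{r_m}}(X)·|η(X) − η(x)|] / ℙ_X(B̄_{r_m}))^{−α}. -/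
open MeasureTheory Filter Topology Set

/-!
Let `ν` be the measure with density `|η - η x|` with respect to `μ`, and for sets `s` put
`M(s) = ν(s)^α μ(s)^{1-α}`, so that `M_α(r) = M(B̄_r)` is nondecreasing in `r`. Continuity of
finite measures along monotone families of balls makes `r ↦ M(B̄_r)` right-continuous with left
limit `M(B_r)`, and it tends to `M({x}) = 0` as `r → 0⁺`. Since `M(B̄_r) < 1/m` for `r < r_m` and
`M(B̄_r) ≥ 1/m` for `r > r_m`, passing to the limits gives `M(B_{r_m}) ≤ 1/m ≤ M(B̄_{r_m})`; the
two claimed inequalities are these, rearranged.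
-/

theorem tendsto_measure_biUnion_lt {α ι : Type*} {_ : MeasurableSpace α} {μ : Measure α}
    [LinearOrder ι] [TopologicalSpace ι] [OrderTopology ι] [FirstCountableTopology ι]
    {s : ι → Set α} {a : ι} (hm : ∀ i j, i ≤ j → j < a → s i ⊆ s j) :
    Tendsto (μ ∘ s) (𝓝[<] a) (𝓝 (μ (⋃ r < a, s r))) := by
  by_cases ha : Order.IsSuccPrelimit a
  · have : (atTop : Filter (Iio a)).IsCountablyGenerated := by
      rw [← comap_coe_Iio_nhdsLT a ha]
      infer_instance
    simp_rw [← map_coe_Iio_atTop a ha, tendsto_map'_iff, ← mem_Iio, biUnion_eq_iUnion]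
    exact tendsto_measure_iUnion_atTop fun i j h ↦ hm i j h j.2
  · rw [Order.not_isSuccPrelimit_iff] at ha
    rcases ha with ⟨b, hab⟩
    simp [hab.nhdsLT]

section Balls

variable {𝒳 : Type*} [PseudoMetricSpace 𝒳] [MeasurableSpace 𝒳] (μ : Measure 𝒳) (x : 𝒳) (R : ℝ)

theorem tendsto_measure_closedBall_nhdsGT [OpensMeasurableSpace 𝒳] [IsFiniteMeasure μ] :
    Tendsto (fun r ↦ μ (Metric.closedBall x r)) (𝓝[>] R) (𝓝 (μ (Metric.closedBall x R))) := by
  rw [← Metric.biInter_gt_closedBall x R]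
  exact tendsto_measure_biInter_gt (fun _ _ ↦ measurableSet_closedBall.nullMeasurableSet)
    (fun _ _ _ h ↦ Metric.closedBall_subset_closedBall h) ⟨R + 1, by simp, measure_ne_top μ _⟩

theorem tendsto_measure_closedBall_nhdsLT :
    Tendsto (fun r ↦ μ (Metric.closedBall x r)) (𝓝[<] R) (𝓝 (μ (Metric.ball x R))) := by
  rw [← Metric.biUnion_lt_closedBall x R]
  exact tendsto_measure_biUnion_lt fun _ _ h _ ↦ Metric.closedBall_subset_closedBall h

end Balls

theorem setIntegral_eq_toReal_withDensity {α : Type*} [MeasurableSpace α] {μ : Measure α}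
    {g : α → ℝ} (hg : 0 ≤ g) (hgm : AEStronglyMeasurable g μ) {s : Set α} (hs : MeasurableSet s) :
    ∫ y in s, g y ∂μ = (μ.withDensity (fun y ↦ ENNReal.ofReal (g y)) s).toReal := by
  rw [integral_eq_lintegral_of_nonneg_ae (ae_of_all _ hg) hgm.restrict, withDensity_apply _ hs]

noncomputable def interpMass {α : Type*} [MeasurableSpace α] (ν μ : Measure α) (a : ℝ)
    (s : Set α) : ℝ :=
  (ν s).toReal ^ a * (μ s).toReal ^ (1 - a)

section InterpMass

variable {α : Type*} [MeasurableSpace α] {ν μ : Measure α} {a : ℝ}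

theorem interpMass_mono [IsFiniteMeasure ν] [IsFiniteMeasure μ] (ha : a ∈ Icc (0 : ℝ) 1) :
    Monotone (interpMass ν μ a) := fun s t hst ↦ by
  have hmono (ρ : Measure α) [IsFiniteMeasure ρ] : (ρ s).toReal ≤ (ρ t).toReal :=
    ENNReal.toReal_mono (measure_ne_top ρ t) (measure_mono hst)
  exact mul_le_mul (Real.rpow_le_rpow ENNReal.toReal_nonneg (hmono ν) ha.1)
    (Real.rpow_le_rpow ENNReal.toReal_nonneg (hmono μ) (sub_nonneg.2 ha.2))
    (by positivity) (by positivity)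

theorem interpMass_pos {s : Set α} (hν : 0 < (ν s).toReal) (hμ : 0 < (μ s).toReal) :
    0 < interpMass ν μ a s :=
  mul_pos (Real.rpow_pos_of_pos hν _) (Real.rpow_pos_of_pos hμ _)

theorem interpMass_eq_zero_of_measure_eq_zero {s : Set α} (ha : a < 1) (hs : μ s = 0) :
    interpMass ν μ a s = 0 := by
  simp [interpMass, hs, Real.zero_rpow (sub_ne_zero.2 ha.ne')]

theorem Filter.Tendsto.interpMass [IsFiniteMeasure ν] [IsFiniteMeasure μ] {ι : Type*}
    {l : Filter ι} {s : ι → Set α} {t : Set α} (ha : a ∈ Icc (0 : ℝ) 1)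
    (hν : Tendsto (ν ∘ s) l (𝓝 (ν t))) (hμ : Tendsto (μ ∘ s) l (𝓝 (μ t))) :
    Tendsto (fun i ↦ _root_.interpMass ν μ a (s i)) l (𝓝 (_root_.interpMass ν μ a t)) :=
  (((ENNReal.tendsto_toReal (measure_ne_top ν t)).comp hν).rpow_const (Or.inr ha.1)).mul
    (((ENNReal.tendsto_toReal (measure_ne_top μ t)).comp hμ).rpow_const
      (Or.inr (sub_nonneg.2 ha.2)))

end InterpMass

noncomputable def sublevelRadius (M : ℝ → ℝ) (c : ℝ) : ℝ :=
  sSup {r : ℝ | 0 < r ∧ M r < c}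

section SublevelRadius

variable {M : ℝ → ℝ} {b c : ℝ}

theorem sublevel_nonempty (h0 : Tendsto M (𝓝[>] 0) (𝓝 0)) (hc : 0 < c) :
    {r : ℝ | 0 < r ∧ M r < c}.Nonempty :=
  ((h0.eventually (gt_mem_nhds hc)).and self_mem_nhdsWithin).exists.imp fun _ h ↦ ⟨h.2, h.1⟩

theorem lt_of_mem_sublevel (hM : Monotone M) (hb : c ≤ M b) {r : ℝ}
    (hr : r ∈ {r : ℝ | 0 < r ∧ M r < c}) : r < b :=
  lt_of_not_ge fun h ↦ (hr.2.trans_le hb).not_ge (hM h)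

theorem bddAbove_sublevel (hM : Monotone M) (hb : c ≤ M b) :
    BddAbove {r : ℝ | 0 < r ∧ M r < c} :=
  ⟨b, fun _ hr ↦ (lt_of_mem_sublevel hM hb hr).le⟩

theorem sublevelRadius_pos (hne : {r : ℝ | 0 < r ∧ M r < c}.Nonempty)
    (hbdd : BddAbove {r : ℝ | 0 < r ∧ M r < c}) : 0 < sublevelRadius M c :=
  let ⟨_, hr⟩ := hne
  hr.1.trans_le (le_csSup hbdd hr)

theorem le_of_tendsto_nhdsGT_sublevelRadius {L : ℝ}
    (hbdd : BddAbove {r : ℝ | 0 < r ∧ M r < c}) (hR : 0 < sublevelRadius M c)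
    (h : Tendsto M (𝓝[>] sublevelRadius M c) (𝓝 L)) : c ≤ L :=
  ge_of_tendsto h <| eventually_nhdsWithin_of_forall fun _ hr ↦
    le_of_not_gt fun hMr ↦ (le_csSup hbdd ⟨hR.trans hr, hMr⟩).not_gt hr

theorem le_of_tendsto_nhdsLT_sublevelRadius {L : ℝ} (hM : Monotone M)
    (hne : {r : ℝ | 0 < r ∧ M r < c}.Nonempty)
    (h : Tendsto M (𝓝[<] sublevelRadius M c) (𝓝 L)) : L ≤ c :=
  le_of_tendsto h <| eventually_nhdsWithin_of_forall fun _ hr ↦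
    let ⟨_, hs, hrs⟩ := exists_lt_of_lt_csSup hne hr
    ((hM hrs.le).trans_lt hs.2).le

theorem tendsto_sublevelRadius_zero (hM : Monotone M) (hpos : ∀ r > 0, 0 < M r) :
    Tendsto (sublevelRadius M) (𝓝 0) (𝓝 0) := by
  -- `Real.sSup_nonneg` and `Real.sSup_le` also cover empty or unbounded sets, whose `sSup` is `0`.
  refine tendsto_order.2 ⟨fun a ha ↦ Eventually.of_forall fun c ↦ ?_, fun ε hε ↦ ?_⟩
  · exact ha.trans_le (Real.sSup_nonneg fun r hr ↦ hr.1.le)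
  · filter_upwards [gt_mem_nhds (hpos (ε / 2) (half_pos hε))] with c hc
    refine (Real.sSup_le (fun r hr ↦ (lt_of_mem_sublevel hM hc.le hr).le) ?_).trans_lt ?_ <;>
      linarith

end SublevelRadius

theorem one_div_le_one_div_mul_div_rpow_one_sub {i v c : ℝ} (a : ℝ) (hi : 0 < i) (hv : 0 < v)
    (h : i ^ a * v ^ (1 - a) ≤ c) : 1 / c ≤ 1 / i * (i / v) ^ (1 - a) := by
  have key : 1 / i * (i / v) ^ (1 - a) = 1 / (i ^ a * v ^ (1 - a)) := by
    rw [Real.div_rpow hi.le hv.le, Real.rpow_sub hi, Real.rpow_one]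
    field_simp
  exact key ▸ one_div_le_one_div_of_le (by positivity) h

theorem one_div_mul_div_rpow_neg_le_one_div {i v c : ℝ} (a : ℝ) (hi : 0 < i) (hv : 0 < v)
    (hc : 0 < c) (h : c ≤ i ^ a * v ^ (1 - a)) : 1 / v * (i / v) ^ (-a) ≤ 1 / c := by
  have key : 1 / v * (i / v) ^ (-a) = 1 / (i ^ a * v ^ (1 - a)) := by
    rw [Real.rpow_neg (div_nonneg hi.le hv.le), Real.div_rpow hi.le hv.le, Real.rpow_sub hv,
      Real.rpow_one]
    field_simp
  exact key ▸ one_div_le_one_div_of_le hc h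

theorem tendsto_interpMass_closedBall_nhdsGT_zero {𝒳 : Type*} [MetricSpace 𝒳]
    [MeasurableSpace 𝒳] [OpensMeasurableSpace 𝒳] {ν μ : Measure 𝒳} [IsFiniteMeasure ν]
    [IsFiniteMeasure μ] {x : 𝒳} {a : ℝ} (ha : a ∈ Ico (0 : ℝ) 1) (hx : μ {x} = 0) :
    Tendsto (fun r ↦ interpMass ν μ a (Metric.closedBall x r)) (𝓝[>] 0) (𝓝 0) := by
  simpa [Metric.closedBall_zero, interpMass_eq_zero_of_measure_eq_zero ha.2 hx] using
    (tendsto_measure_closedBall_nhdsGT ν x 0).interpMass (Ico_subset_Icc_self ha)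
      (tendsto_measure_closedBall_nhdsGT μ x 0)

section ClosedBall

variable {𝒳 : Type*} [PseudoMetricSpace 𝒳] [MeasurableSpace 𝒳] {ν μ : Measure 𝒳}
  [IsFiniteMeasure ν] [IsFiniteMeasure μ] {x : 𝒳} {a c : ℝ}

theorem monotone_interpMass_closedBall (ha : a ∈ Icc (0 : ℝ) 1) :
    Monotone fun r ↦ interpMass ν μ a (Metric.closedBall x r) :=
  (interpMass_mono ha).comp fun _ _ h ↦ Metric.closedBall_subset_closedBall h

theorem le_interpMass_closedBall_sublevelRadius [OpensMeasurableSpace 𝒳]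
    (ha : a ∈ Icc (0 : ℝ) 1)
    (hbdd : BddAbove {r : ℝ | 0 < r ∧ interpMass ν μ a (Metric.closedBall x r) < c})
    (hR : 0 < sublevelRadius (fun r ↦ interpMass ν μ a (Metric.closedBall x r)) c) :
    c ≤ interpMass ν μ a (Metric.closedBall x
      (sublevelRadius (fun r ↦ interpMass ν μ a (Metric.closedBall x r)) c)) :=
  le_of_tendsto_nhdsGT_sublevelRadius hbdd hR <|
    (tendsto_measure_closedBall_nhdsGT ν x _).interpMass ha
      (tendsto_measure_closedBall_nhdsGT μ x _)

theorem interpMass_ball_sublevelRadius_le (ha : a ∈ Icc (0 : ℝ) 1)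
    (hne : {r : ℝ | 0 < r ∧ interpMass ν μ a (Metric.closedBall x r) < c}.Nonempty) :
    interpMass ν μ a
      (Metric.ball x (sublevelRadius (fun r ↦ interpMass ν μ a (Metric.closedBall x r)) c)) ≤ c :=
  le_of_tendsto_nhdsLT_sublevelRadius (monotone_interpMass_closedBall ha) hne <|
    (tendsto_measure_closedBall_nhdsLT ν x _).interpMass ha
      (tendsto_measure_closedBall_nhdsLT μ x _)

end ClosedBall

section Positivity

variable {𝒳 : Type*} [PseudoMetricSpace 𝒳] [MeasurableSpace 𝒳] {ρ : Measure 𝒳}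
  [IsFiniteMeasure ρ] {x : 𝒳} {R : ℝ}

theorem toReal_measure_closedBall_pos (hρ : ∀ r > 0, 0 < ρ (Metric.closedBall x r)) (hR : 0 < R) :
    0 < (ρ (Metric.closedBall x R)).toReal :=
  ENNReal.toReal_pos (hρ R hR).ne' (measure_ne_top ρ _)

theorem toReal_measure_ball_pos (hρ : ∀ r > 0, 0 < ρ (Metric.closedBall x r)) (hR : 0 < R) :
    0 < (ρ (Metric.ball x R)).toReal :=
  (toReal_measure_closedBall_pos hρ (half_pos hR)).trans_le <|
    ENNReal.toReal_mono (measure_ne_top ρ _) <|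
      measure_mono (Metric.closedBall_subset_ball (half_lt_self hR))

end Positivity

theorem stmt_3_general
    {𝒳 Ω : Type*} [MetricSpace 𝒳] [MeasurableSpace 𝒳] [BorelSpace 𝒳]
    {mΩ : MeasurableSpace Ω} (P : Measure Ω) [IsProbabilityMeasure P]
    (X : ℕ → Ω → 𝒳) (μ : Measure 𝒳)
    (hXdist : ∀ i, P.map (X i) = μ)
    (x : 𝒳) (hsupp : ∀ r > (0 : ℝ), 0 < μ (Metric.closedBall x r))
    (η : 𝒳 → ℝ) (hηmeas : Measurable η) (C : ℝ) (hηbdd : ∀ y, |η y| ≤ C)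
    (hatom : μ {x} = 0)
    (hnontriv : ∀ r > (0 : ℝ), 0 < ∫ y in Metric.closedBall x r, |η y - η x| ∂μ)
    (α : ℝ) (hα : α ∈ Set.Ioo (0 : ℝ) 1)
    (M : ℝ → ℝ)
    (hM : ∀ r : ℝ, M r = (∫ y in Metric.closedBall x r, |η y - η x| ∂μ) ^ α *
      ((μ (Metric.closedBall x r)).toReal) ^ (1 - α))
    (m₁ : ℕ) (hm₁ : m₁ = ⌈1 / M 1⌉₊)
    (rseq : ℕ → ℝ)
    (hrseq : ∀ m : ℕ, rseq m = sSup {r : ℝ | 0 < r ∧ M r < 1 / (m : ℝ)}) :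
    (∀ m : ℕ, m₁ ≤ m →
      ({r : ℝ | 0 < r ∧ M r < 1 / (m : ℝ)}.Nonempty ∧
        BddAbove {r : ℝ | 0 < r ∧ M r < 1 / (m : ℝ)} ∧
        0 < rseq m)) ∧
    Tendsto rseq atTop (𝓝 0) ∧
    (∀ m : ℕ, m₁ ≤ m →
      ((m : ℝ) ≤ (1 / ∫ y in Metric.ball x (rseq m), |η y - η x| ∂μ) *
        ((∫ y in Metric.ball x (rseq m), |η y - η x| ∂μ) /
          (μ (Metric.ball x (rseq m))).toReal) ^ (1 - α) ∧
      (m : ℝ) ≥ (1 / (μ (Metric.closedBall x (rseq m))).toReal) *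
        ((∫ y in Metric.closedBall x (rseq m), |η y - η x| ∂μ) /
          (μ (Metric.closedBall x (rseq m))).toReal) ^ (-α))) := by
  have hα' : α ∈ Icc (0 : ℝ) 1 := Ioo_subset_Icc_self hα
  have : IsFiniteMeasure μ := hXdist 0 ▸ Measure.isFiniteMeasure_map P (X 0)
  have hg : Integrable (fun y ↦ |η y - η x|) μ :=
    ((Integrable.of_bound hηmeas.aestronglyMeasurable C (ae_of_all _ hηbdd)).sub
      (integrable_const _)).abs
  set ν := μ.withDensity fun y ↦ ENNReal.ofReal |η y - η x|
  have : IsFiniteMeasure ν := isFiniteMeasure_withDensity_ofReal hg.2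
  have hI {s : Set 𝒳} (hs : MeasurableSet s) : ∫ y in s, |η y - η x| ∂μ = (ν s).toReal :=
    setIntegral_eq_toReal_withDensity (fun _ ↦ abs_nonneg _) hg.1 hs
  have hν (r : ℝ) (hr : 0 < r) : 0 < ν (Metric.closedBall x r) :=
    (ENNReal.toReal_pos_iff.1 (hI measurableSet_closedBall ▸ hnontriv r hr)).1
  obtain rfl : M = fun r ↦ interpMass ν μ α (Metric.closedBall x r) :=
    funext fun r ↦ by rw [hM, hI measurableSet_closedBall, interpMass]
  obtain rfl : rseq = fun m : ℕ ↦
      sublevelRadius (fun r ↦ interpMass ν μ α (Metric.closedBall x r)) (1 / m) := funext hrseq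
  have hMpos (r : ℝ) (hr : 0 < r) : 0 < interpMass ν μ α (Metric.closedBall x r) :=
    interpMass_pos (toReal_measure_closedBall_pos hν hr) (toReal_measure_closedBall_pos hsupp hr)
  have hmono := monotone_interpMass_closedBall (ν := ν) (μ := μ) (x := x) hα'
  have hc (m : ℕ) (hm : m₁ ≤ m) :
      0 < 1 / (m : ℝ) ∧ 1 / (m : ℝ) ≤ interpMass ν μ α (Metric.closedBall x 1) := by
    have hm' : 1 / interpMass ν μ α (Metric.closedBall x 1) ≤ m := Nat.ceil_le.1 (hm₁ ▸ hm)
    have hm0 : 0 < (m : ℝ) := (one_div_pos.2 (hMpos 1 one_pos)).trans_le hm'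
    exact ⟨one_div_pos.2 hm0, (one_div_le (hMpos 1 one_pos) hm0).1 hm'⟩
  have hne (m : ℕ) (hm : m₁ ≤ m) := sublevel_nonempty
    (tendsto_interpMass_closedBall_nhdsGT_zero (ν := ν) (Ioo_subset_Ico_self hα) hatom) (hc m hm).1
  have hbdd (m : ℕ) (hm : m₁ ≤ m) := bddAbove_sublevel hmono (hc m hm).2
  have hR (m : ℕ) (hm : m₁ ≤ m) := sublevelRadius_pos (hne m hm) (hbdd m hm)
  refine ⟨fun m hm ↦ ⟨hne m hm, hbdd m hm, hR m hm⟩,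
    (tendsto_sublevelRadius_zero hmono hMpos).comp tendsto_one_div_atTop_nhds_zero_nat,
    fun m hm ↦ ?_⟩
  rw [hI measurableSet_ball, hI measurableSet_closedBall, ← one_div_one_div (m : ℝ), ge_iff_le]
  exact ⟨one_div_le_one_div_mul_div_rpow_one_sub α (toReal_measure_ball_pos hν (hR m hm))
      (toReal_measure_ball_pos hsupp (hR m hm)) (interpMass_ball_sublevelRadius_le hα' (hne m hm)),
    one_div_mul_div_rpow_neg_le_one_div α (toReal_measure_closedBall_pos hν (hR m hm))
      (toReal_measure_closedBall_pos hsupp (hR m hm)) (hc m hm).1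
      (le_interpMass_closedBall_sublevelRadius hα' (hbdd m hm) (hR m hm))⟩

/-- **Lemma (properties of α-sequences).**
In the nearest-neighbor setting, under the non-triviality assumptions `μ {x} = 0` and
`𝔼[𝟙_{B̄_r}(X)·|η(X) − η(x)|] > 0` for every `r > 0`, fix `α ∈ (0,1)` and let
`M(r) := (𝔼[𝟙_{B̄_r}(X)·|η(X) − η(x)|])^α · (μ(B̄_r))^{1−α}`,
`m₁ := ⌈1 / M(1)⌉`, and `r_m := sup {r > 0 | M(r) < 1/m}` for `m ≥ m₁`.
Then the α-sequence `(r_m)_{m ≥ m₁}` is well defined (the defining set is nonempty and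
bounded above), consists of strictly positive numbers, vanishes as `m → ∞`, and for
every `m ≥ m₁`:
`m ≤ (1/𝔼[𝟙_{B_{r_m}}(X)·|η(X)−η(x)|]) · (𝔼[𝟙_{B_{r_m}}(X)·|η(X)−η(x)|]/μ(B_{r_m}))^{1−α}`
(open balls) and
`m ≥ (1/μ(B̄_{r_m})) · (𝔼[𝟙_{B̄_{r_m}}(X)·|η(X)−η(x)|]/μ(B̄_{r_m}))^{−α}` (closed balls). -/
theorem stmt_3
    {𝒳 Ω : Type*} [MetricSpace 𝒳] [MeasurableSpace 𝒳] [BorelSpace 𝒳]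
    {mΩ : MeasurableSpace Ω} (P : Measure Ω) [IsProbabilityMeasure P]
    (X : ℕ → Ω → 𝒳) (μ : Measure 𝒳)
    (hXmeas : ∀ i, Measurable (X i))
    (hXindep : ProbabilityTheory.iIndepFun X P)
    (hXdist : ∀ i, P.map (X i) = μ)
    (x : 𝒳) (hsupp : ∀ r > (0 : ℝ), 0 < μ (Metric.closedBall x r))
    (η : 𝒳 → ℝ) (hηmeas : Measurable η) (C : ℝ) (hηbdd : ∀ y, |η y| ≤ C)
    (hatom : μ {x} = 0)
    (hnontriv : ∀ r > (0 : ℝ), 0 < ∫ y in Metric.closedBall x r, |η y - η x| ∂μ)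
    (α : ℝ) (hα : α ∈ Set.Ioo (0 : ℝ) 1)
    (M : ℝ → ℝ)
    (hM : ∀ r : ℝ, M r = (∫ y in Metric.closedBall x r, |η y - η x| ∂μ) ^ α *
      ((μ (Metric.closedBall x r)).toReal) ^ (1 - α))
    (m₁ : ℕ) (hm₁ : m₁ = ⌈1 / M 1⌉₊)
    (rseq : ℕ → ℝ)
    (hrseq : ∀ m : ℕ, rseq m = sSup {r : ℝ | 0 < r ∧ M r < 1 / (m : ℝ)}) :
    (∀ m : ℕ, m₁ ≤ m →
      ({r : ℝ | 0 < r ∧ M r < 1 / (m : ℝ)}.Nonempty ∧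
        BddAbove {r : ℝ | 0 < r ∧ M r < 1 / (m : ℝ)} ∧
        0 < rseq m)) ∧
    Tendsto rseq atTop (𝓝 0) ∧
    (∀ m : ℕ, m₁ ≤ m →
      ((m : ℝ) ≤ (1 / ∫ y in Metric.ball x (rseq m), |η y - η x| ∂μ) *
        ((∫ y in Metric.ball x (rseq m), |η y - η x| ∂μ) /
          (μ (Metric.ball x (rseq m))).toReal) ^ (1 - α) ∧
      (m : ℝ) ≥ (1 / (μ (Metric.closedBall x (rseq m))).toReal) *
        ((∫ y in Metric.closedBall x (rseq m), |η y - η x| ∂μ) /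
          (μ (Metric.closedBall x (rseq m))).toReal) ^ (-α))) :=
  stmt_3_general (mΩ := mΩ) P X μ hXdist x hsupp η hηmeas C hηbdd hatom hnontriv α hα M hM m₁ hm₁
    rseq hrseq
end

section
/- Let (r_m)_{m ≥ m₁} be an α-sequence for some α ∈ (0,1). If x is a Lebesgue point for η with respect to ℙ_X, then the following are equivalent: (1) 𝔼[|η(X^x_m) − η(x)|] → 0 as m → ∞; (2) 𝔼[𝟙_{S_{r_m}}(X^x_m)·|η(X^x_m) − η(x)|] → 0 as m → ∞. -/
/-!
Write `ρ = |η - η x| · μ`, so that `M_α(r) = ρ(B̄_r)^α μ(B̄_r)^(1-α)`, and split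
`𝔼|η(X^x_m) - η(x)|` according to whether `X^x_m` lies in the open ball `B_{r_m}`, on the sphere
`S_{r_m}`, or outside `B̄_{r_m}`. The law of `X^x_m` is at most `m μ`, so the ball term is at most
`m ρ(B_{r_m})`; for `r < r_m` we have `m ρ(B̄_r) = m M_α(r) (ρ(B̄_r)/μ(B̄_r))^(1-α)`, which is
small because `m M_α(r) < 1`, `r_m → 0` and `x` is a Lebesgue point. The nearest neighbour lies
outside `B̄_{r_m}` only if all `m` samples do, which has probability at most
`exp(-m μ(B̄_{r_m}))`; for `r > r_m` we have `1/m ≤ M_α(r) = (ρ(B̄_r)/μ(B̄_r))^α μ(B̄_r)`, so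
`m μ(B̄_{r_m}) → ∞`. Hence only the sphere term can fail to vanish.
-/

open MeasureTheory Filter Topology Set Metric
open scoped ENNReal

namespace Real

lemma rpow_mul_rpow_one_sub_eq_div_rpow_mul {a b α : ℝ} (ha : 0 ≤ a) (hb : 0 < b) :
    a ^ α * b ^ (1 - α) = (a / b) ^ α * b := by
  rw [div_rpow ha hb.le, rpow_sub hb, rpow_one]
  field_simp

lemma rpow_mul_rpow_one_sub_mul_div_rpow_one_sub {a b α : ℝ} (ha : 0 ≤ a) (hb : 0 < b) :
    a ^ α * b ^ (1 - α) * (a / b) ^ (1 - α) = a := by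
  rw [rpow_mul_rpow_one_sub_eq_div_rpow_mul ha hb, mul_right_comm,
    ← rpow_add' (div_nonneg ha hb.le) (by norm_num), add_sub_cancel, rpow_one,
    div_mul_cancel₀ a hb.ne']

end Real

namespace Monotone

variable {f : ℝ → ℝ} {b c r : ℝ}

lemma le_of_mem_sublevel (hf : Monotone f) (hb : c ≤ f b) (hr : r ∈ {s | 0 < s ∧ f s < c}) :
    r ≤ b :=
  le_of_not_gt fun hbr => (hb.trans (hf hbr.le)).not_gt hr.2

lemma bddAbove_sublevel (hf : Monotone f) (hb : c ≤ f b) : BddAbove {s | 0 < s ∧ f s < c} :=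
  ⟨b, fun _ hs => hf.le_of_mem_sublevel hb hs⟩

lemma sSup_sublevel_le (hf : Monotone f) (hb : c ≤ f b) (hb0 : 0 ≤ b) :
    sSup {s | 0 < s ∧ f s < c} ≤ b :=
  Real.sSup_le (fun _ hs => hf.le_of_mem_sublevel hb hs) hb0

lemma lt_of_lt_sSup_sublevel (hf : Monotone f) (hr : 0 < r)
    (hrs : r < sSup {s | 0 < s ∧ f s < c}) : f r < c := by
  by_contra! hcr
  exact hrs.not_ge (hf.sSup_sublevel_le hcr hr.le)

lemma le_of_sSup_sublevel_lt (hf : Monotone f) (hb : c ≤ f b) (hr : 0 < r)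
    (hrs : sSup {s | 0 < s ∧ f s < c} < r) : c ≤ f r := by
  by_contra! hrc
  exact hrs.not_ge (le_csSup (hf.bddAbove_sublevel hb) ⟨hr, hrc⟩)

lemma tendsto_sSup_sublevel {ι : Type*} {l : Filter ι} {c : ι → ℝ} (hf : Monotone f)
    (hpos : ∀ r > 0, 0 < f r) (h0 : Tendsto f (𝓝[>] 0) (𝓝 0))
    (hc : Tendsto c l (𝓝[>] 0)) :
    Tendsto (fun i => sSup {s | 0 < s ∧ f s < c i}) l (𝓝[>] 0) := by
  have hc0 : Tendsto c l (𝓝 0) := tendsto_nhdsWithin_iff.1 hc |>.1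
  have hpos_sup : ∀ᶠ i in l, 0 < sSup {s | 0 < s ∧ f s < c i} := by
    filter_upwards [hc0.eventually_lt_const (hpos 1 one_pos), tendsto_nhdsWithin_iff.1 hc |>.2]
      with i hi hci
    obtain ⟨t, hft, ht⟩ := ((h0.eventually_lt_const hci).and self_mem_nhdsWithin).exists
    exact ht.trans_le (le_csSup (hf.bddAbove_sublevel hi.le) ⟨ht, hft⟩)
  refine tendsto_nhdsWithin_iff.2 ⟨tendsto_order.2 ⟨fun a ha => ?_, fun a ha => ?_⟩, hpos_sup⟩
  · exact hpos_sup.mono fun i hi => ha.trans hi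
  · filter_upwards [hc0.eventually_lt_const (hpos (a / 2) (half_pos ha))] with i hi
    exact (hf.sSup_sublevel_le hi.le (half_pos ha).le).trans_lt (half_lt_self ha)

end Monotone

section BallMeasure

variable {𝒳 : Type*} [PseudoMetricSpace 𝒳] [MeasurableSpace 𝒳]
  {ρ : Measure 𝒳} [IsFiniteMeasure ρ] {x : 𝒳} {a b c : ℝ}

lemma measureReal_ball_le_of_forall_mem_Ioo (hba : b < a)
    (h : ∀ r ∈ Ioo b a, ρ.real (closedBall x r) ≤ c) : ρ.real (ball x a) ≤ c := by
  obtain ⟨u, hu_mono, hu_mem, hu_lim⟩ := exists_seq_strictMono_tendsto' hba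
  have hunion : ⋃ n, closedBall x (u n) = ball x a := by
    ext z
    simp only [mem_iUnion, mem_closedBall, mem_ball]
    exact ⟨fun ⟨n, hn⟩ => hn.trans_lt (hu_mem n).2,
      fun hz => ((hu_lim.eventually_const_lt hz).exists).imp fun _ => le_of_lt⟩
  have hlim := tendsto_measure_iUnion_atTop (μ := ρ)
    (s := fun n => closedBall x (u n))
    fun i j hij => closedBall_subset_closedBall (hu_mono.monotone hij)
  rw [hunion] at hlim
  exact le_of_tendsto' ((ENNReal.tendsto_toReal (measure_ne_top ρ _)).comp hlim)
    fun n => h _ (hu_mem n)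

lemma le_measureReal_closedBall_of_forall_mem_Ioo [OpensMeasurableSpace 𝒳] (hab : a < b)
    (h : ∀ r ∈ Ioo a b, c ≤ ρ.real (closedBall x r)) : c ≤ ρ.real (closedBall x a) := by
  have hlim := tendsto_measure_biInter_gt (μ := ρ) (s := closedBall x) (a := a)
    (fun r _ => measurableSet_closedBall.nullMeasurableSet)
    (fun i j _ hij => closedBall_subset_closedBall hij) ⟨b, hab, measure_ne_top ρ _⟩
  rw [biInter_gt_closedBall] at hlim
  exact ge_of_tendsto ((ENNReal.tendsto_toReal (measure_ne_top ρ _)).comp hlim)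
    (eventually_of_mem (Ioo_mem_nhdsGT hab) h)

end BallMeasure

section AlphaSequence

variable {𝒳 : Type*} [PseudoMetricSpace 𝒳] [MeasurableSpace 𝒳]
  {ρ μ : Measure 𝒳} {x : 𝒳} {α : ℝ}

/-- The paper's `M_α`, with `ρ` standing for the measure `|η - η x| · μ`. -/
noncomputable def alphaMass (ρ μ : Measure 𝒳) (x : 𝒳) (α r : ℝ) : ℝ :=
  ρ.real (closedBall x r) ^ α * μ.real (closedBall x r) ^ (1 - α)

noncomputable def alphaSeq (ρ μ : Measure 𝒳) (x : 𝒳) (α : ℝ) (m : ℕ) : ℝ :=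
  sSup {r | 0 < r ∧ alphaMass ρ μ x α r < 1 / m}

lemma alphaMass_mono [IsFiniteMeasure ρ] [IsFiniteMeasure μ] (hα : α ∈ Icc 0 1) :
    Monotone (alphaMass ρ μ x α) := fun r s hrs => by
  obtain ⟨hα0, hα1⟩ := hα
  have hball := closedBall_subset_closedBall (x := x) hrs
  unfold alphaMass
  gcongr <;> first | linarith | finiteness

lemma alphaMass_eq {r : ℝ} (hμr : 0 < μ.real (closedBall x r)) :
    alphaMass ρ μ x α r =
      (ρ.real (closedBall x r) / μ.real (closedBall x r)) ^ α * μ.real (closedBall x r) :=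
  Real.rpow_mul_rpow_one_sub_eq_div_rpow_mul measureReal_nonneg hμr

lemma alphaMass_pos {r : ℝ} (hρr : 0 < ρ.real (closedBall x r))
    (hμr : 0 < μ.real (closedBall x r)) : 0 < alphaMass ρ μ x α r := by
  unfold alphaMass
  positivity

lemma tendsto_alphaMass_nhdsGT_zero [IsProbabilityMeasure μ] (hα : 0 < α)
    (hμ : ∀ r > 0, 0 < μ.real (closedBall x r))
    (hLeb : Tendsto (fun r => ρ.real (closedBall x r) / μ.real (closedBall x r)) (𝓝[>] 0) (𝓝 0)) :
    Tendsto (alphaMass ρ μ x α) (𝓝[>] 0) (𝓝 0) := by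
  refine squeeze_zero' (Eventually.of_forall fun r => by unfold alphaMass; positivity) ?_
    (hLeb.rpow_const_nhds_zero hα)
  filter_upwards [self_mem_nhdsWithin] with r hr
  rw [alphaMass_eq (hμ r hr)]
  exact mul_le_of_le_one_right (by positivity) measureReal_le_one

variable [IsFiniteMeasure ρ] [IsProbabilityMeasure μ]

lemma tendsto_alphaSeq (hα : α ∈ Ioo 0 1)
    (hρ : ∀ r > 0, 0 < ρ.real (closedBall x r)) (hμ : ∀ r > 0, 0 < μ.real (closedBall x r))
    (hLeb : Tendsto (fun r => ρ.real (closedBall x r) / μ.real (closedBall x r)) (𝓝[>] 0) (𝓝 0)) :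
    Tendsto (alphaSeq ρ μ x α) atTop (𝓝[>] 0) :=
  (alphaMass_mono (Ioo_subset_Icc_self hα)).tendsto_sSup_sublevel
    (fun r hr => alphaMass_pos (hρ r hr) (hμ r hr)) (tendsto_alphaMass_nhdsGT_zero hα.1 hμ hLeb)
    (tendsto_nhdsWithin_iff.2 ⟨tendsto_one_div_atTop_nhds_zero_nat,
      (eventually_gt_atTop 0).mono fun m hm => by simp [hm]⟩)

lemma tendsto_natCast_mul_measureReal_ball_alphaSeq (hα : α ∈ Ioo 0 1)
    (hρ : ∀ r > 0, 0 < ρ.real (closedBall x r)) (hμ : ∀ r > 0, 0 < μ.real (closedBall x r))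
    (hLeb : Tendsto (fun r => ρ.real (closedBall x r) / μ.real (closedBall x r)) (𝓝[>] 0) (𝓝 0)) :
    Tendsto (fun m : ℕ => m * ρ.real (ball x (alphaSeq ρ μ x α m))) atTop (𝓝 0) := by
  refine tendsto_order.2 ⟨fun a ha => Eventually.of_forall fun m => ha.trans_le (by positivity),
    fun ε hε => ?_⟩
  obtain ⟨δ, hδ, hratio⟩ := mem_nhdsGT_iff_exists_Ioo_subset.1
    ((hLeb.rpow_const_nhds_zero (sub_pos.2 hα.2)).eventually_lt_const (half_pos hε))
  filter_upwards [(tendsto_alphaSeq hα hρ hμ hLeb).eventually (Ioo_mem_nhdsGT hδ),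
    eventually_gt_atTop 0] with m hm hm0
  have hm0' : (0 : ℝ) < m := Nat.cast_pos.2 hm0
  suffices ρ.real (ball x (alphaSeq ρ μ x α m)) ≤ ε / 2 / m by
    calc (m : ℝ) * ρ.real (ball x (alphaSeq ρ μ x α m)) ≤ m * (ε / 2 / m) := by gcongr
      _ < ε := by rw [mul_div_cancel₀ _ hm0'.ne']; linarith
  refine measureReal_ball_le_of_forall_mem_Ioo hm.1 fun r hr => ?_
  have hM : alphaMass ρ μ x α r < 1 / m :=
    (alphaMass_mono (Ioo_subset_Icc_self hα)).lt_of_lt_sSup_sublevel hr.1 hr.2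
  have hmM : m * alphaMass ρ μ x α r ≤ 1 := ((lt_div_iff₀' hm0').1 hM).le
  rw [le_div_iff₀ hm0']
  calc ρ.real (closedBall x r) * m
      = m * alphaMass ρ μ x α r *
          (ρ.real (closedBall x r) / μ.real (closedBall x r)) ^ (1 - α) := by
        rw [alphaMass, mul_assoc, Real.rpow_mul_rpow_one_sub_mul_div_rpow_one_sub
          measureReal_nonneg (hμ r hr.1), mul_comm]
    _ ≤ 1 * (ε / 2) := by
        gcongr
        exact (hratio ⟨hr.1, hr.2.trans hm.2⟩).le
    _ = ε / 2 := one_mul _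

lemma tendsto_natCast_mul_measureReal_closedBall_alphaSeq [OpensMeasurableSpace 𝒳]
    (hα : α ∈ Ioo 0 1)
    (hρ : ∀ r > 0, 0 < ρ.real (closedBall x r)) (hμ : ∀ r > 0, 0 < μ.real (closedBall x r))
    (hLeb : Tendsto (fun r => ρ.real (closedBall x r) / μ.real (closedBall x r)) (𝓝[>] 0) (𝓝 0)) :
    Tendsto (fun m : ℕ => m * μ.real (closedBall x (alphaSeq ρ μ x α m))) atTop atTop := by
  refine tendsto_atTop.2 fun K => ?_
  obtain ⟨δ, hδ, hratio⟩ := mem_nhdsGT_iff_exists_Ioo_subset.1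
    ((hLeb.rpow_const_nhds_zero hα.1).eventually_lt_const (inv_pos.2 (lt_max_of_lt_right one_pos)))
  have hmono := alphaMass_mono (ρ := ρ) (μ := μ) (x := x) (Ioo_subset_Icc_self hα)
  filter_upwards [(tendsto_alphaSeq hα hρ hμ hLeb).eventually (Ioo_mem_nhdsGT hδ),
    eventually_gt_atTop 0, tendsto_one_div_atTop_nhds_zero_nat.eventually_lt_const
      (alphaMass_pos (hρ 1 one_pos) (hμ 1 one_pos))] with m hm hm0 hm1
  have hm0' : (0 : ℝ) < m := Nat.cast_pos.2 hm0
  suffices max K 1 / m ≤ μ.real (closedBall x (alphaSeq ρ μ x α m)) by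
    rw [div_le_iff₀' hm0'] at this
    exact (le_max_left K 1).trans this
  refine le_measureReal_closedBall_of_forall_mem_Ioo hm.2 fun r hr => ?_
  have hr0 : 0 < r := hm.1.trans hr.1
  have hM : 1 / m ≤ alphaMass ρ μ x α r := hmono.le_of_sSup_sublevel_lt hm1.le hr0 hr.1
  rw [alphaMass_eq (hμ r hr0)] at hM
  have hK : (0 : ℝ) < max K 1 := lt_max_of_lt_right one_pos
  calc max K 1 / m = max K 1 * (1 / m) := by ring
    _ ≤ max K 1 * ((ρ.real (closedBall x r) / μ.real (closedBall x r)) ^ α *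
          μ.real (closedBall x r)) := by gcongr
    _ ≤ max K 1 * ((max K 1)⁻¹ * μ.real (closedBall x r)) := by
        gcongr
        exact (hratio ⟨hr0, hr.2⟩).le
    _ = μ.real (closedBall x r) := by field_simp

end AlphaSequence

lemma MeasureTheory.setIntegral_le_toReal_mul_of_le_smul {α : Type*} [MeasurableSpace α]
    {ν μ : Measure α} {c : ℝ≥0∞} (hc : c ≠ ∞) (hle : ν ≤ c • μ) {f : α → ℝ} (hf0 : 0 ≤ f)
    {s : Set α} (hf : IntegrableOn f s μ) : ∫ x in s, f x ∂ν ≤ c.toReal * ∫ x in s, f x ∂μ :=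
  calc ∫ x in s, f x ∂ν ≤ ∫ x in s, f x ∂(c • μ) :=
        integral_mono_measure (Measure.restrict_mono subset_rfl hle)
          (Eventually.of_forall hf0) (Measure.restrict_smul c μ s ▸ hf.smul_measure hc)
    _ = c.toReal * ∫ x in s, f x ∂μ := by
        rw [Measure.restrict_smul, integral_smul_measure, smul_eq_mul]

lemma MeasureTheory.measureReal_withDensity_ofReal {α : Type*} [MeasurableSpace α]
    {μ : Measure α} {f : α → ℝ} (hf0 : 0 ≤ f) (hf : AEStronglyMeasurable f μ) {s : Set α}
    (hs : MeasurableSet s) :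
    (μ.withDensity fun y => ENNReal.ofReal (f y)).real s = ∫ y in s, f y ∂μ := by
  rw [measureReal_def, withDensity_apply _ hs,
    integral_eq_lintegral_of_nonneg_ae (Eventually.of_forall hf0) hf.restrict]

section SphereReduction

variable {𝒳 : Type*} [PseudoMetricSpace 𝒳] [MeasurableSpace 𝒳] [OpensMeasurableSpace 𝒳]
  {g : 𝒳 → ℝ} {x : 𝒳}

lemma integral_eq_setIntegral_ball_add_sphere_add_compl {ν : Measure 𝒳} (hg : Integrable g ν)
    (r : ℝ) :
    ∫ y, g y ∂ν = ∫ y in ball x r, g y ∂ν + ∫ y in sphere x r, g y ∂ν +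
      ∫ y in (closedBall x r)ᶜ, g y ∂ν := by
  rw [← setIntegral_union sphere_disjoint_ball.symm isClosed_sphere.measurableSet
    hg.integrableOn hg.integrableOn, ball_union_sphere,
    integral_add_compl measurableSet_closedBall hg]

lemma tendsto_integral_iff_tendsto_setIntegral_sphere {ι : Type*} {l : Filter ι}
    {ν : ι → Measure 𝒳} {r : ι → ℝ} (hg0 : 0 ≤ g) (hg : ∀ i, Integrable g (ν i))
    (hball : Tendsto (fun i => ∫ y in ball x (r i), g y ∂ν i) l (𝓝 0))
    (hfar : Tendsto (fun i => ∫ y in (closedBall x (r i))ᶜ, g y ∂ν i) l (𝓝 0)) :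
    Tendsto (fun i => ∫ y, g y ∂ν i) l (𝓝 0) ↔
      Tendsto (fun i => ∫ y in sphere x (r i), g y ∂ν i) l (𝓝 0) := by
  refine ⟨fun h => squeeze_zero (fun i => setIntegral_nonneg isClosed_sphere.measurableSet
    fun y _ => hg0 y) (fun i => setIntegral_le_integral (hg i) (Eventually.of_forall hg0)) h,
    fun h => ?_⟩
  simpa [← integral_eq_setIntegral_ball_add_sphere_add_compl (hg _)] using (hball.add h).add hfar

end SphereReduction

section NearestNeighbor

variable {𝒳 Ω : Type*} [MeasurableSpace 𝒳] {mΩ : MeasurableSpace Ω} {P : Measure Ω}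
  {X : ℕ → Ω → 𝒳} {μ : Measure 𝒳} {Y : Ω → 𝒳} {m : ℕ}

lemma map_le_smul_of_forall_exists_eq (hX : ∀ i, Measurable (X i))
    (hXμ : ∀ i, P.map (X i) = μ) (hY : Measurable Y) (hYX : ∀ ω, ∃ i < m, Y ω = X i ω) :
    P.map Y ≤ (m : ℝ≥0∞) • μ := by
  refine Measure.le_iff.2 fun s hs => ?_
  calc P.map Y s = P (Y ⁻¹' s) := Measure.map_apply hY hs
    _ ≤ P (⋃ i ∈ Finset.range m, X i ⁻¹' s) := measure_mono fun ω hω => by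
        obtain ⟨i, hi, hYi⟩ := hYX ω
        exact mem_biUnion (Finset.mem_range.2 hi) (show X i ω ∈ s from hYi ▸ hω)
    _ ≤ ∑ i ∈ Finset.range m, P (X i ⁻¹' s) := measure_biUnion_finset_le _ _
    _ = ((m : ℝ≥0∞) • μ) s := by simp [← Measure.map_apply (hX _) hs, hXμ]

lemma measure_preimage_le_pow (hXindep : ProbabilityTheory.iIndepFun X P)
    (hX : ∀ i, Measurable (X i)) (hXμ : ∀ i, P.map (X i) = μ) {A : Set 𝒳}
    (hA : MeasurableSet A) (hYX : ∀ ω, Y ω ∈ A → ∀ j < m, X j ω ∈ A) :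
    P (Y ⁻¹' A) ≤ μ A ^ m :=
  calc P (Y ⁻¹' A) ≤ P (⋂ j ∈ Finset.range m, X j ⁻¹' A) := measure_mono fun ω hω =>
        mem_iInter₂.2 fun j hj => hYX ω hω j (Finset.mem_range.1 hj)
    _ = ∏ j ∈ Finset.range m, P (X j ⁻¹' A) := hXindep.meas_biInter fun j _ => ⟨A, hA, rfl⟩
    _ = μ A ^ m := by simp [← Measure.map_apply (hX _) hA, hXμ]

variable {NN : ℕ → Ω → 𝒳} {g : 𝒳 → ℝ}

lemma tendsto_setIntegral_map_of_tendsto_natCast_mul (hX : ∀ i, Measurable (X i))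
    (hXμ : ∀ i, P.map (X i) = μ) (hNNmeas : ∀ m, 1 ≤ m → Measurable (NN m))
    (hNN : ∀ m, 1 ≤ m → ∀ ω, ∃ i < m, NN m ω = X i ω) (hg0 : 0 ≤ g) (hg : Integrable g μ)
    {s : ℕ → Set 𝒳} (hs : Tendsto (fun m : ℕ => m * ∫ y in s m, g y ∂μ) atTop (𝓝 0)) :
    Tendsto (fun m => ∫ y in s m, g y ∂P.map (NN m)) atTop (𝓝 0) := by
  refine squeeze_zero' (Eventually.of_forall fun m => integral_nonneg hg0) ?_ hs
  filter_upwards [eventually_ge_atTop 1] with m hm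
  simpa using setIntegral_le_toReal_mul_of_le_smul (ENNReal.natCast_ne_top m)
    (map_le_smul_of_forall_exists_eq hX hXμ (hNNmeas m hm) (hNN m hm)) hg0 hg.integrableOn

variable [PseudoMetricSpace 𝒳] [OpensMeasurableSpace 𝒳] {x : 𝒳}

lemma measureReal_preimage_compl_closedBall_le_exp [IsProbabilityMeasure μ]
    (hXindep : ProbabilityTheory.iIndepFun X P) (hX : ∀ i, Measurable (X i))
    (hXμ : ∀ i, P.map (X i) = μ) (hYX : ∀ ω, ∀ j < m, dist x (Y ω) ≤ dist x (X j ω)) (r : ℝ) :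
    P.real (Y ⁻¹' (closedBall x r)ᶜ) ≤ Real.exp (-(m * μ.real (closedBall x r))) := by
  have hfar : ∀ ω, Y ω ∈ (closedBall x r)ᶜ → ∀ j < m, X j ω ∈ (closedBall x r)ᶜ :=
    fun ω hω j hj => by
      simp only [mem_compl_iff, mem_closedBall, not_le, dist_comm _ x] at hω ⊢
      exact hω.trans_le (hYX ω j hj)
  calc P.real (Y ⁻¹' (closedBall x r)ᶜ) ≤ μ.real (closedBall x r)ᶜ ^ m := by
        rw [measureReal_def, measureReal_def, ← ENNReal.toReal_pow]
        exact ENNReal.toReal_mono (by finiteness)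
          (measure_preimage_le_pow hXindep hX hXμ measurableSet_closedBall.compl hfar)
    _ = (1 - μ.real (closedBall x r)) ^ m := by
        rw [probReal_compl_eq_one_sub measurableSet_closedBall]
    _ ≤ Real.exp (-μ.real (closedBall x r)) ^ m :=
        pow_le_pow_left₀ (sub_nonneg.2 measureReal_le_one)
          (by linarith [Real.add_one_le_exp (-μ.real (closedBall x r))]) m
    _ = Real.exp (-(m * μ.real (closedBall x r))) := by rw [← Real.exp_nat_mul]; ring_nf

lemma setIntegral_compl_closedBall_map_le_exp [IsFiniteMeasure P] [IsProbabilityMeasure μ]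
    (hXindep : ProbabilityTheory.iIndepFun X P) (hX : ∀ i, Measurable (X i))
    (hXμ : ∀ i, P.map (X i) = μ) (hY : Measurable Y)
    (hYX : ∀ ω, ∀ j < m, dist x (Y ω) ≤ dist x (X j ω)) {g : 𝒳 → ℝ} {B : ℝ}
    (hg : ∀ y, ‖g y‖ ≤ B) (r : ℝ) :
    ∫ y in (closedBall x r)ᶜ, g y ∂P.map Y ≤ B * Real.exp (-(m * μ.real (closedBall x r))) :=
  calc ∫ y in (closedBall x r)ᶜ, g y ∂P.map Y ≤ B * (P.map Y).real (closedBall x r)ᶜ :=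
        (Real.le_norm_self _).trans
          (norm_setIntegral_le_of_norm_le_const (measure_lt_top _ _) fun y _ => hg y)
    _ = B * P.real (Y ⁻¹' (closedBall x r)ᶜ) := by
        rw [map_measureReal_apply hY measurableSet_closedBall.compl]
    _ ≤ B * Real.exp (-(m * μ.real (closedBall x r))) :=
        mul_le_mul_of_nonneg_left
          (measureReal_preimage_compl_closedBall_le_exp hXindep hX hXμ hYX r)
          ((norm_nonneg _).trans (hg x))

lemma tendsto_setIntegral_compl_closedBall_map [IsFiniteMeasure P] [IsProbabilityMeasure μ]
    (hXindep : ProbabilityTheory.iIndepFun X P) (hX : ∀ i, Measurable (X i))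
    (hXμ : ∀ i, P.map (X i) = μ) (hNNmeas : ∀ m, 1 ≤ m → Measurable (NN m))
    (hNN : ∀ m, 1 ≤ m → ∀ ω, ∀ j < m, dist x (NN m ω) ≤ dist x (X j ω)) (hg0 : 0 ≤ g)
    {B : ℝ} (hg : ∀ y, ‖g y‖ ≤ B) {r : ℕ → ℝ}
    (hr : Tendsto (fun m : ℕ => m * μ.real (closedBall x (r m))) atTop atTop) :
    Tendsto (fun m => ∫ y in (closedBall x (r m))ᶜ, g y ∂P.map (NN m)) atTop (𝓝 0) := by
  refine squeeze_zero' (Eventually.of_forall fun m => integral_nonneg hg0) ?_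
    (by simpa using (Real.tendsto_exp_neg_atTop_nhds_zero.comp hr).const_mul B)
  filter_upwards [eventually_ge_atTop 1] with m hm
  exact setIntegral_compl_closedBall_map_le_exp hXindep hX hXμ (hNNmeas m hm) (hNN m hm) hg _

theorem tendsto_integral_map_iff_tendsto_setIntegral_sphere_alphaSeq [IsFiniteMeasure P]
    [IsProbabilityMeasure μ] {ρ : Measure 𝒳} [IsFiniteMeasure ρ]
    (hXindep : ProbabilityTheory.iIndepFun X P) (hX : ∀ i, Measurable (X i))
    (hXμ : ∀ i, P.map (X i) = μ) (hNNmeas : ∀ m, 1 ≤ m → Measurable (NN m))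
    (hNN : ∀ m, 1 ≤ m → ∀ ω, (∃ i < m, NN m ω = X i ω) ∧
      ∀ j < m, dist x (NN m ω) ≤ dist x (X j ω))
    (hg_meas : Measurable g) (hg0 : 0 ≤ g) {B : ℝ} (hg_bdd : ∀ y, ‖g y‖ ≤ B)
    (hρg : ∀ s, MeasurableSet s → ∫ y in s, g y ∂μ = ρ.real s) {α : ℝ} (hα : α ∈ Ioo 0 1)
    (hρ : ∀ r > 0, 0 < ρ.real (closedBall x r)) (hμ : ∀ r > 0, 0 < μ.real (closedBall x r))
    (hLeb : Tendsto (fun r => ρ.real (closedBall x r) / μ.real (closedBall x r)) (𝓝[>] 0) (𝓝 0)) :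
    Tendsto (fun m => ∫ y, g y ∂P.map (NN m)) atTop (𝓝 0) ↔
      Tendsto (fun m => ∫ y in sphere x (alphaSeq ρ μ x α m), g y ∂P.map (NN m)) atTop (𝓝 0) := by
  have hg_int : ∀ (ν : Measure 𝒳) [IsFiniteMeasure ν], Integrable g ν := fun _ _ =>
    .of_bound hg_meas.aestronglyMeasurable B (Eventually.of_forall hg_bdd)
  refine tendsto_integral_iff_tendsto_setIntegral_sphere hg0 (fun m => hg_int _) ?_ ?_
  · refine tendsto_setIntegral_map_of_tendsto_natCast_mul hX hXμ hNNmeas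
      (fun m hm ω => (hNN m hm ω).1) hg0 (hg_int μ) ?_
    simpa only [hρg _ measurableSet_ball] using
      tendsto_natCast_mul_measureReal_ball_alphaSeq hα hρ hμ hLeb
  · exact tendsto_setIntegral_compl_closedBall_map hXindep hX hXμ hNNmeas
      (fun m hm ω => (hNN m hm ω).2) hg0 hg_bdd
      (tendsto_natCast_mul_measureReal_closedBall_alphaSeq hα hρ hμ hLeb)

end NearestNeighbor

theorem stmt_5_general
    {𝒳 Ω : Type*} [MetricSpace 𝒳] [MeasurableSpace 𝒳] [BorelSpace 𝒳]
    {mΩ : MeasurableSpace Ω} (P : Measure Ω) [IsProbabilityMeasure P]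
    (X : ℕ → Ω → 𝒳) (μ : Measure 𝒳)
    (hXmeas : ∀ i, Measurable (X i))
    (hXindep : ProbabilityTheory.iIndepFun X P)
    (hXdist : ∀ i, P.map (X i) = μ)
    (x : 𝒳) (hsupp : ∀ r > (0 : ℝ), 0 < μ (Metric.closedBall x r))
    (η : 𝒳 → ℝ) (hηmeas : Measurable η) (C : ℝ) (hηbdd : ∀ y, |η y| ≤ C)
    (NN : ℕ → Ω → 𝒳)
    (hNNmeas : ∀ m, 1 ≤ m → Measurable (NN m))
    (hNN : ∀ m, 1 ≤ m → ∀ ω, (∃ i < m, NN m ω = X i ω) ∧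
      ∀ j < m, dist x (NN m ω) ≤ dist x (X j ω))
    (hnontriv : ∀ r > (0 : ℝ), 0 < ∫ y in Metric.closedBall x r, |η y - η x| ∂μ)
    (α : ℝ) (hα : α ∈ Set.Ioo (0 : ℝ) 1)
    (M : ℝ → ℝ)
    (hM : ∀ r : ℝ, M r = (∫ y in Metric.closedBall x r, |η y - η x| ∂μ) ^ α *
      ((μ (Metric.closedBall x r)).toReal) ^ (1 - α))
    (rseq : ℕ → ℝ)
    (hrseq : ∀ m : ℕ, rseq m = sSup {r : ℝ | 0 < r ∧ M r < 1 / (m : ℝ)})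
    (hLeb : Tendsto
      (fun r : ℝ =>
        (∫ y in Metric.closedBall x r, |η y - η x| ∂μ) /
          (μ (Metric.closedBall x r)).toReal)
      (𝓝[>] 0) (𝓝 0)) :
    Tendsto (fun m : ℕ => ∫ ω, |η (NN m ω) - η x| ∂P) atTop (𝓝 0) ↔
    Tendsto
      (fun m : ℕ =>
        ∫ ω, Set.indicator (Metric.sphere x (rseq m)) (fun y => |η y - η x|) (NN m ω) ∂P)
      atTop (𝓝 0) := by
  have hμ : IsProbabilityMeasure μ :=
    hXdist 0 ▸ Measure.isProbabilityMeasure_map (hXmeas 0).aemeasurable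
  set g : 𝒳 → ℝ := fun y => |η y - η x|
  have hg_meas : Measurable g := (hηmeas.sub measurable_const).abs
  have hg_bdd : ∀ y, ‖g y‖ ≤ 2 * C := fun y => by
    rw [Real.norm_eq_abs, abs_abs]
    linarith [abs_sub (η y) (η x), hηbdd y, hηbdd x]
  set ρ := μ.withDensity fun y => ENNReal.ofReal (g y)
  have : IsFiniteMeasure ρ := isFiniteMeasure_withDensity_ofReal
    (Integrable.of_bound hg_meas.aestronglyMeasurable _ (Eventually.of_forall hg_bdd)).2
  have hρg : ∀ s, MeasurableSet s → ∫ y in s, g y ∂μ = ρ.real s := fun s hs =>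
    (measureReal_withDensity_ofReal (fun y => abs_nonneg _) hg_meas.aestronglyMeasurable hs).symm
  obtain rfl : rseq = alphaSeq ρ μ x α := by
    have hMρ : M = alphaMass ρ μ x α := funext fun r => by
      rw [hM, hρg _ measurableSet_closedBall]; rfl
    funext m
    rw [hrseq, alphaSeq, hMρ]
  have key := tendsto_integral_map_iff_tendsto_setIntegral_sphere_alphaSeq hXindep hXmeas hXdist
    hNNmeas hNN hg_meas (fun y => abs_nonneg _) hg_bdd hρg hα
    (fun r hr => hρg _ measurableSet_closedBall ▸ hnontriv r hr)
    (fun r hr => ENNReal.toReal_pos (hsupp r hr).ne' (measure_ne_top _ _))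
    (by simpa only [← hρg _ measurableSet_closedBall, measureReal_def] using hLeb)
  refine (tendsto_congr' ?_).trans (key.trans (tendsto_congr' ?_))
  · filter_upwards [eventually_ge_atTop 1] with m hm
    exact (integral_map (hNNmeas m hm).aemeasurable hg_meas.aestronglyMeasurable).symm
  · filter_upwards [eventually_ge_atTop 1] with m hm
    rw [← integral_map (hNNmeas m hm).aemeasurable
      (hg_meas.indicator isClosed_sphere.measurableSet).aestronglyMeasurable,
      integral_indicator isClosed_sphere.measurableSet]

/-- **Theorem (reduction to spheres along α-sequences).**
In the nearest-neighbor setting, under the non-triviality assumptions, let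
`(r_m)_{m ≥ m₁}` be the α-sequence for some `α ∈ (0,1)`. If `x` is a Lebesgue point for
`η` with respect to the common distribution `μ`, then
`𝔼[|η(NN m) − η(x)|] → 0` iff `𝔼[𝟙_{S_{r_m}}(NN m)·|η(NN m) − η(x)|] → 0`
as `m → ∞`. -/
theorem stmt_5
    {𝒳 Ω : Type*} [MetricSpace 𝒳] [MeasurableSpace 𝒳] [BorelSpace 𝒳]
    {mΩ : MeasurableSpace Ω} (P : Measure Ω) [IsProbabilityMeasure P]
    (X : ℕ → Ω → 𝒳) (μ : Measure 𝒳)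
    (hXmeas : ∀ i, Measurable (X i))
    (hXindep : ProbabilityTheory.iIndepFun X P)
    (hXdist : ∀ i, P.map (X i) = μ)
    (x : 𝒳) (hsupp : ∀ r > (0 : ℝ), 0 < μ (Metric.closedBall x r))
    (η : 𝒳 → ℝ) (hηmeas : Measurable η) (C : ℝ) (hηbdd : ∀ y, |η y| ≤ C)
    (NN : ℕ → Ω → 𝒳)
    (hNNmeas : ∀ m, 1 ≤ m → Measurable (NN m))
    (hNN : ∀ m, 1 ≤ m → ∀ ω, (∃ i < m, NN m ω = X i ω) ∧
      ∀ j < m, dist x (NN m ω) ≤ dist x (X j ω))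
    (hatom : μ {x} = 0)
    (hnontriv : ∀ r > (0 : ℝ), 0 < ∫ y in Metric.closedBall x r, |η y - η x| ∂μ)
    (α : ℝ) (hα : α ∈ Set.Ioo (0 : ℝ) 1)
    (M : ℝ → ℝ)
    (hM : ∀ r : ℝ, M r = (∫ y in Metric.closedBall x r, |η y - η x| ∂μ) ^ α *
      ((μ (Metric.closedBall x r)).toReal) ^ (1 - α))
    (m₁ : ℕ) (hm₁ : m₁ = ⌈1 / M 1⌉₊)
    (rseq : ℕ → ℝ)
    (hrseq : ∀ m : ℕ, rseq m = sSup {r : ℝ | 0 < r ∧ M r < 1 / (m : ℝ)})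
    (hLeb : Tendsto
      (fun r : ℝ =>
        (∫ y in Metric.closedBall x r, |η y - η x| ∂μ) /
          (μ (Metric.closedBall x r)).toReal)
      (𝓝[>] 0) (𝓝 0)) :
    Tendsto (fun m : ℕ => ∫ ω, |η (NN m ω) - η x| ∂P) atTop (𝓝 0) ↔
    Tendsto
      (fun m : ℕ =>
        ∫ ω, Set.indicator (Metric.sphere x (rseq m)) (fun y => |η y - η x|) (NN m ω) ∂P)
      atTop (𝓝 0) :=
  stmt_5_general (mΩ := mΩ) P X μ hXmeas hXindep hXdist x hsupp η hηmeas C hηbdd NN hNNmeas hNN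
    hnontriv α hα M hM rseq hrseq hLeb
end

section
/- Assume there exist K ≥ 0 and R > 0 such that ℙ_X(S_r) ≤ K · ℙ_X(B_r) for all r ∈ (0, R). If x is a Lebesgue point for η with respect to ℙ_X, then 𝔼[|η(X^x_m) − η(x)|] → 0 as m → ∞. -/
/-!
Put `g = |η - η x|` and fix `δ`. If no sample among the first `m` lies in `closedBall x δ`, an
event of probability `(1 - μ (closedBall x δ)) ^ m`, bound `g` by `2 C`. Otherwise the nearest
neighbour is a sample `X i` in `closedBall x δ` no farther from `x` than the others, and by Fubini
each index `i` contributes `∫ 𝟙_{closedBall x δ} g · (1 - u) ^ (m - 1) dμ`, where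
`u y = μ (ball x (dist x y))`. The points of `closedBall x δ` with `u < t` lie in some
`closedBall x ρ` with `μ (ball x ρ) ≤ t`; the Lebesgue point property, together with
`μ (sphere x r) ≤ K μ (ball x r)` to pass from the closed to the open ball, gives
`∫_{u < t} 𝟙_{closedBall x δ} g dμ ≤ c t` with `c` small, and a layer-cake computation turns this
into the bound `c / m` for each index. Hence `𝔼 g(X^x_m) ≤ 2 C (1 - μ (closedBall x δ)) ^ m + c`.
-/

open MeasureTheory Filter Topology ProbabilityTheory Metric

lemma integral_Ioc_one_sub_pow {u : ℝ} (hu : u ≤ 1) (n : ℕ) :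
    ∫ t in Set.Ioc u 1, (n + 1) * (1 - t) ^ n = (1 - u) ^ (n + 1) := by
  rw [← intervalIntegral.integral_of_le hu, intervalIntegral.integral_const_mul,
    intervalIntegral.integral_comp_sub_left (fun s => s ^ n), integral_pow]
  field_simp
  simp

lemma integral_Ioc_one_sub_pow_mul_self (n : ℕ) :
    ∫ t in Set.Ioc (0 : ℝ) 1, (n + 1) * (1 - t) ^ n * t = 1 / (n + 2) := by
  rw [← intervalIntegral.integral_of_le zero_le_one]
  have : ∀ t : ℝ, (n + 1) * (1 - t) ^ n * t = (n + 1) * ((1 - t) ^ n - (1 - t) ^ (n + 1)) := by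
    intro t; ring
  simp_rw [this]
  rw [intervalIntegral.integral_const_mul,
    intervalIntegral.integral_sub (Continuous.intervalIntegrable (by fun_prop) _ _)
      (Continuous.intervalIntegrable (by fun_prop) _ _),
    intervalIntegral.integral_comp_sub_left (fun s => s ^ n),
    intervalIntegral.integral_comp_sub_left (fun s => s ^ (n + 1))]
  simp only [sub_self, sub_zero, integral_pow, one_pow]
  push_cast
  field_simp
  ring

/-- Layer-cake: `(1 - u) ^ (n + 1) = ∫₀¹ 𝟙{u < t} (n + 1) (1 - t) ^ n dt`, then Fubini. -/
lemma integral_one_sub_pow_mul_le {α : Type*} [MeasurableSpace α] {μ : Measure α} [SFinite μ]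
    {h u : α → ℝ} (hh : Integrable h μ) (hu : Measurable u) (hu0 : ∀ y, 0 ≤ u y)
    (hu1 : ∀ y, u y ≤ 1)
    {c : ℝ} (hc : ∀ t ∈ Set.Ioc (0 : ℝ) 1, ∫ y in {y | u y < t}, h y ∂μ ≤ c * t) (n : ℕ) :
    ∫ y, (1 - u y) ^ (n + 1) * h y ∂μ ≤ c / (n + 2) := by
  set ν := volume.restrict (Set.Ioc (0 : ℝ) 1)
  set W : α → ℝ → ℝ := fun y t =>
    (Set.Ioc (u y) 1).indicator (fun t => (n + 1) * (1 - t) ^ n) t * h y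
  have hWint : Integrable (Function.uncurry W) (μ.prod ν) := by
    refine ((hh.comp_fst ν).bdd_mul (c := n + 1) ?_ ?_)
    · have hs : MeasurableSet {p : α × ℝ | p.2 ∈ Set.Ioc (u p.1) 1} :=
        (measurableSet_lt (hu.comp measurable_fst) measurable_snd).inter
          (measurableSet_le measurable_snd measurable_const)
      exact (Measurable.indicator (f := fun p : α × ℝ => (n + 1 : ℝ) * (1 - p.2) ^ n)
        (by fun_prop) hs).aestronglyMeasurable
    · refine ae_of_all _ fun p => ?_
      by_cases hp : p.2 ∈ Set.Ioc (u p.1) 1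
      · have h0 : 0 ≤ 1 - p.2 := by linarith [hp.2]
        have h1 : 1 - p.2 ≤ 1 := by linarith [hp.1, hu0 p.1]
        rw [Set.indicator_of_mem hp, Real.norm_eq_abs, abs_of_nonneg (by positivity)]
        exact mul_le_of_le_one_right (by positivity) (pow_le_one₀ h0 h1)
      · simp only [Set.indicator_of_notMem hp, norm_zero]
        positivity
  have hy : ∀ y, ∫ t, W y t ∂ν = (1 - u y) ^ (n + 1) * h y := by
    intro y
    rw [integral_mul_const, setIntegral_indicator measurableSet_Ioc, Set.Ioc_inter_Ioc,
      max_eq_right (hu0 y), min_self, integral_Ioc_one_sub_pow (hu1 y)]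
  have ht : ∀ t ∈ Set.Ioc (0 : ℝ) 1, ∫ y, W y t ∂μ ≤ c * ((n + 1) * (1 - t) ^ n * t) := by
    intro t ht
    have : ∀ y, W y t = (n + 1) * (1 - t) ^ n * {y | u y < t}.indicator h y := by
      intro y
      by_cases hyt : u y < t <;> simp [W, hyt, ht.2]
    simp_rw [this]
    rw [integral_const_mul, integral_indicator (measurableSet_lt hu measurable_const)]
    have h1t : 0 ≤ 1 - t := by linarith [ht.2]
    calc (n + 1) * (1 - t) ^ n * ∫ y in {y | u y < t}, h y ∂μ
        ≤ (n + 1) * (1 - t) ^ n * (c * t) := by gcongr; exact hc t ht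
      _ = c * ((n + 1) * (1 - t) ^ n * t) := by ring
  calc ∫ y, (1 - u y) ^ (n + 1) * h y ∂μ = ∫ t, ∫ y, W y t ∂μ ∂ν := by
        simp_rw [← hy]; exact integral_integral_swap hWint
    _ ≤ ∫ t, c * ((n + 1) * (1 - t) ^ n * t) ∂ν :=
        integral_mono_ae hWint.integral_prod_right
          (Continuous.integrableOn_Ioc (by fun_prop))
          ((ae_restrict_iff' measurableSet_Ioc).2 (ae_of_all _ ht))
    _ = c / (n + 2) := by
        rw [integral_const_mul, integral_Ioc_one_sub_pow_mul_self]; ring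

lemma measureReal_ball_le_of_forall_lt {α : Type*} [PseudoMetricSpace α] [MeasurableSpace α]
    {μ : Measure α} [IsFiniteMeasure μ] {x : α} {ρ t : ℝ}
    (h : ∀ r < ρ, μ.real (ball x r) ≤ t) : μ.real (ball x ρ) ≤ t := by
  have ht : 0 ≤ t := measureReal_nonneg.trans (h (ρ - 1) (by linarith))
  have hcover : ball x ρ = ⋃ n : ℕ, ball x (ρ - 1 / (n + 1)) := by
    refine subset_antisymm (fun y hy => ?_) (Set.iUnion_subset fun n => ball_subset_ball (by
      have : (0 : ℝ) < 1 / (n + 1) := Nat.one_div_pos_of_nat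
      linarith))
    obtain ⟨n, hn⟩ := exists_nat_one_div_lt (sub_pos.2 (mem_ball.1 hy))
    exact Set.mem_iUnion.2 ⟨n, mem_ball.2 (by linarith)⟩
  have hmono : Monotone fun n : ℕ => ball x (ρ - 1 / (n + 1)) := fun m n hmn =>
    ball_subset_ball (by gcongr)
  rw [measureReal_def, hcover, hmono.measure_iUnion]
  refine ENNReal.toReal_le_of_le_ofReal ht (iSup_le fun n => ?_)
  rw [ENNReal.le_ofReal_iff_toReal_le (measure_ne_top μ _) ht]
  exact h _ (by have : (0 : ℝ) < 1 / (n + 1) := Nat.one_div_pos_of_nat; linarith)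

lemma setIntegral_measureReal_ball_lt_le {α : Type*} [PseudoMetricSpace α] [MeasurableSpace α]
    [OpensMeasurableSpace α] {μ : Measure α} [IsFiniteMeasure μ] {g : α → ℝ}
    (hg : Integrable g μ) (hg0 : ∀ y, 0 ≤ g y) {x : α} {δ c : ℝ} (hδ : 0 ≤ δ) (hc : 0 ≤ c)
    (hG : ∀ r ∈ Set.Icc 0 δ, ∫ y in closedBall x r, g y ∂μ ≤ c * μ.real (ball x r))
    {t : ℝ} (ht : 0 < t) :
    ∫ y in {y | μ.real (ball x (dist x y)) < t}, (closedBall x δ).indicator g y ∂μ ≤ c * t := by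
  set S := {r | r ∈ Set.Icc 0 δ ∧ μ.real (ball x r) < t}
  have h0S : (0 : ℝ) ∈ S := ⟨⟨le_rfl, hδ⟩, by simpa using ht⟩
  have hbdd : BddAbove S := ⟨δ, fun r hr => hr.1.2⟩
  set ρ := sSup S
  have hρ : ρ ∈ Set.Icc 0 δ := ⟨le_csSup hbdd h0S, csSup_le ⟨0, h0S⟩ fun r hr => hr.1.2⟩
  have hsub : {y | μ.real (ball x (dist x y)) < t} ∩ closedBall x δ ⊆ closedBall x ρ :=
    fun y ⟨hyt, hyδ⟩ => mem_closedBall'.2 <|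
      le_csSup hbdd ⟨⟨dist_nonneg, mem_closedBall'.1 hyδ⟩, hyt⟩
  have hball : μ.real (ball x ρ) ≤ t := by
    refine measureReal_ball_le_of_forall_lt fun r hr => ?_
    obtain ⟨s, hs, hrs⟩ := exists_lt_of_lt_csSup ⟨0, h0S⟩ hr
    exact (measureReal_mono (ball_subset_ball hrs.le)).trans hs.2.le
  calc ∫ y in {y | μ.real (ball x (dist x y)) < t}, (closedBall x δ).indicator g y ∂μ
      ≤ ∫ y in closedBall x ρ, g y ∂μ := by
        rw [setIntegral_indicator measurableSet_closedBall]
        exact setIntegral_mono_set hg.integrableOn (ae_of_all _ hg0) hsub.eventuallyLE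
    _ ≤ c * μ.real (ball x ρ) := hG ρ hρ
    _ ≤ c * t := by gcongr

lemma measureReal_univ_pi_const {ι α : Type*} [Fintype ι] [MeasurableSpace α] (μ : Measure α)
    [SigmaFinite μ] (s : Set α) :
    (Measure.pi fun _ : ι => μ).real (Set.univ.pi fun _ => s) = μ.real s ^ Fintype.card ι := by
  rw [measureReal_def, Measure.pi_pi, ENNReal.toReal_prod, Finset.prod_const, Finset.card_univ,
    measureReal_def]

lemma integral_pi_indicator_forall_le {α : Type*} [MeasurableSpace α] (μ : Measure α)
    [IsFiniteMeasure μ] {φ : α → ℝ} (hφ : Measurable φ) {f : α → ℝ} (hf : Integrable f μ)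
    {n : ℕ} (i : Fin (n + 1)) :
    ∫ y, {y : Fin (n + 1) → α | ∀ j, φ (y i) ≤ φ (y j)}.indicator (fun y => f (y i)) y
        ∂Measure.pi (fun _ => μ) =
      ∫ a, μ.real {b | φ a ≤ φ b} ^ n * f a ∂μ := by
  set F : α × (Fin n → α) → ℝ := {p | ∀ j, φ p.1 ≤ φ (p.2 j)}.indicator (fun p => f p.1)
  have hFmeas : MeasurableSet {p : α × (Fin n → α) | ∀ j, φ p.1 ≤ φ (p.2 j)} := by
    simp only [Set.ofPred_forall]
    exact .iInter fun j => measurableSet_le (hφ.comp measurable_fst)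
      (hφ.comp ((measurable_pi_apply j).comp measurable_snd))
  have hF : ∀ y, {y : Fin (n + 1) → α | ∀ j, φ (y i) ≤ φ (y j)}.indicator (fun y => f (y i)) y =
      F (MeasurableEquiv.piFinSuccAbove (fun _ => α) i y) := by
    intro y
    simp [F, Set.indicator, i.forall_iff_succAbove, Fin.removeNth]
    congr
  simp_rw [hF]
  rw [(measurePreserving_piFinSuccAbove (fun _ => μ) i).integral_comp' F,
    integral_prod F ((hf.comp_fst _).indicator hFmeas)]
  congr 1 with a
  have hslice : ∀ z : Fin n → α, F (a, z) =
      (Set.univ.pi fun _ => {b | φ a ≤ φ b}).indicator (fun _ => f a) z := by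
    intro z
    simp [F, Set.indicator]
  simp_rw [hslice]
  rw [integral_indicator_const _ (.univ_pi fun _ => measurableSet_le measurable_const hφ),
    measureReal_univ_pi_const, Fintype.card_fin, smul_eq_mul]

lemma ProbabilityTheory.iIndepFun.map_fin_eq_pi {𝒳 Ω : Type*} [MeasurableSpace 𝒳]
    {mΩ : MeasurableSpace Ω} {P : Measure Ω} [IsProbabilityMeasure P] {X : ℕ → Ω → 𝒳}
    {μ : Measure 𝒳}
    (hXmeas : ∀ i, Measurable (X i)) (hXindep : iIndepFun X P)
    (hXdist : ∀ i, P.map (X i) = μ) (m : ℕ) :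
    P.map (fun ω (i : Fin m) => X i ω) = Measure.pi fun _ => μ := by
  have h := (iIndepFun_iff_map_fun_eq_pi_map (f := fun i : Fin m => X i)
    fun i => (hXmeas i).aemeasurable).1 (hXindep.precomp Fin.val_injective)
  simpa only [hXdist] using h

lemma le_indicator_add_sum_indicator_nearest {α : Type*} [PseudoMetricSpace α] {x : α} {m : ℕ}
    (y : Fin m → α) {i₀ : Fin m} (hi₀ : ∀ j, dist x (y i₀) ≤ dist x (y j)) {g : α → ℝ}
    (hg0 : ∀ a, 0 ≤ g a) {B : ℝ} (hgB : ∀ a, g a ≤ B) (δ : ℝ) :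
    g (y i₀) ≤ (Set.univ.pi fun _ => (closedBall x δ)ᶜ).indicator (fun _ => B) y +
      ∑ i, {y : Fin m → α | ∀ j, dist x (y i) ≤ dist x (y j)}.indicator
        (fun y => (closedBall x δ).indicator g (y i)) y := by
  have hsum : ∀ i, 0 ≤ {y : Fin m → α | ∀ j, dist x (y i) ≤ dist x (y j)}.indicator
      (fun y => (closedBall x δ).indicator g (y i)) y :=
    fun i => Set.indicator_nonneg (fun _ _ => Set.indicator_nonneg (fun a _ => hg0 a) _) _
  by_cases hδ : y i₀ ∈ closedBall x δ
  · have hterm : g (y i₀) = {y : Fin m → α | ∀ j, dist x (y i₀) ≤ dist x (y j)}.indicator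
        (fun y => (closedBall x δ).indicator g (y i₀)) y := by
      rw [Set.indicator_of_mem (s := {y : Fin m → α | ∀ j, dist x (y i₀) ≤ dist x (y j)}) hi₀,
        Set.indicator_of_mem hδ]
    have hB : 0 ≤ (Set.univ.pi fun _ => (closedBall x δ)ᶜ).indicator (fun _ => B) y :=
      Set.indicator_nonneg (fun _ _ => (hg0 _).trans (hgB (y i₀))) _
    linarith [Finset.single_le_sum (fun i _ => hsum i) (Finset.mem_univ i₀)]
  · have hfar : y ∈ Set.univ.pi fun _ => (closedBall x δ)ᶜ := fun j _ => by
      simp only [Set.mem_compl_iff, mem_closedBall', not_le] at hδ ⊢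
      exact hδ.trans_le (hi₀ j)
    rw [Set.indicator_of_mem hfar]
    linarith [hgB (y i₀), Finset.sum_nonneg fun i (_ : i ∈ Finset.univ) => hsum i]

lemma integral_nearest_le {𝒳 Ω : Type*} [PseudoMetricSpace 𝒳] [MeasurableSpace 𝒳]
    [OpensMeasurableSpace 𝒳] {mΩ : MeasurableSpace Ω} {P : Measure Ω} [IsProbabilityMeasure P]
    {X : ℕ → Ω → 𝒳} {μ : Measure 𝒳} [IsProbabilityMeasure μ] (hXmeas : ∀ i, Measurable (X i))
    (hXindep : iIndepFun X P) (hXdist : ∀ i, P.map (X i) = μ) {x : 𝒳} {g : 𝒳 → ℝ}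
    (hg : Measurable g) (hg0 : ∀ y, 0 ≤ g y) {B : ℝ} (hgB : ∀ y, g y ≤ B) {δ c : ℝ}
    (hδ : 0 ≤ δ) (hc : 0 ≤ c)
    (hG : ∀ r ∈ Set.Icc 0 δ, ∫ y in closedBall x r, g y ∂μ ≤ c * μ.real (ball x r))
    {n : ℕ} {N : Ω → 𝒳}
    (hN : ∀ ω, (∃ i < n + 2, N ω = X i ω) ∧ ∀ j < n + 2, dist x (N ω) ≤ dist x (X j ω)) :
    ∫ ω, g (N ω) ∂P ≤ B * (1 - μ.real (closedBall x δ)) ^ (n + 2) + c := by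
  set Y : Ω → Fin (n + 2) → 𝒳 := fun ω i => X i ω
  have hY : Measurable Y := measurable_pi_lambda _ fun i => hXmeas i
  set far := Set.univ.pi fun _ : Fin (n + 2) => (closedBall x δ)ᶜ
  have hfar : MeasurableSet far := .univ_pi fun _ => measurableSet_closedBall.compl
  set f := (closedBall x δ).indicator g
  have hgint : Integrable g μ := .of_bound hg.aestronglyMeasurable B
    (ae_of_all _ fun y => (Real.norm_of_nonneg (hg0 y)).trans_le (hgB y))
  have hf : Integrable f μ := hgint.indicator measurableSet_closedBall
  have hdist : Measurable (dist x) := (continuous_const.dist continuous_id).measurable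
  have hnear : ∀ i, MeasurableSet {y : Fin (n + 2) → 𝒳 | ∀ j, dist x (y i) ≤ dist x (y j)} := by
    intro i
    simp only [Set.ofPred_forall]
    exact .iInter fun j => measurableSet_le (hdist.comp (measurable_pi_apply i))
      (hdist.comp (measurable_pi_apply j))
  set Φ : (Fin (n + 2) → 𝒳) → ℝ := fun y => far.indicator (fun _ => B) y +
    ∑ i, {y : Fin (n + 2) → 𝒳 | ∀ j, dist x (y i) ≤ dist x (y j)}.indicator (fun y => f (y i)) y
  have hterm : ∀ i, Integrable (fun y : Fin (n + 2) → 𝒳 => {y : Fin (n + 2) → 𝒳 |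
      ∀ j, dist x (y i) ≤ dist x (y j)}.indicator (fun y => f (y i)) y) (Measure.pi fun _ => μ) :=
    fun i => (((measurePreserving_eval (fun _ => μ) i).integrable_comp (g := f)
      hf.aestronglyMeasurable).2 hf).indicator (hnear i)
  have hΦ : Integrable Φ (P.map Y) := by
    rw [hXindep.map_fin_eq_pi hXmeas hXdist]
    exact ((integrable_const B).indicator hfar).add (integrable_finsetSum _ fun i _ => hterm i)
  have hpt : ∀ ω, g (N ω) ≤ Φ (Y ω) := by
    intro ω
    obtain ⟨⟨i, hi, hNi⟩, hle⟩ := hN ω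
    rw [hNi] at hle ⊢
    exact le_indicator_add_sum_indicator_nearest (Y ω) (i₀ := ⟨i, hi⟩) (fun j => hle j j.2)
      hg0 hgB δ
  have hball : ∀ a, μ.real {b | dist x a ≤ dist x b} = 1 - μ.real (ball x (dist x a)) := by
    intro a
    have : {b | dist x a ≤ dist x b} = (ball x (dist x a))ᶜ := by
      ext b
      simp [dist_comm]
    rw [this, measureReal_compl measurableSet_ball, probReal_univ]
  have hsummand : ∫ a, μ.real {b | dist x a ≤ dist x b} ^ (n + 1) * f a ∂μ ≤ c / (n + 2) := by
    simp_rw [hball]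
    have hu : Measurable fun y => μ.real (ball x (dist x y)) :=
      (Monotone.measurable fun r s hrs => measureReal_mono (ball_subset_ball hrs)).comp hdist
    exact integral_one_sub_pow_mul_le hf hu (fun _ => measureReal_nonneg)
      (fun _ => measureReal_le_one)
      (fun t ht => setIntegral_measureReal_ball_lt_le hgint hg0 hδ hc hG ht.1) n
  calc ∫ ω, g (N ω) ∂P ≤ ∫ ω, Φ (Y ω) ∂P :=
        integral_mono_of_nonneg (ae_of_all _ fun ω => hg0 _) (hΦ.comp_measurable hY)
          (ae_of_all _ hpt)
    _ = ∫ y, Φ y ∂(Measure.pi fun _ => μ) := by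
        rw [← hXindep.map_fin_eq_pi hXmeas hXdist, integral_map hY.aemeasurable
          hΦ.aestronglyMeasurable]
    _ = B * (1 - μ.real (closedBall x δ)) ^ (n + 2) +
          ∑ _i : Fin (n + 2), ∫ a, μ.real {b | dist x a ≤ dist x b} ^ (n + 1) * f a ∂μ := by
        rw [integral_add ((integrable_const B).indicator hfar)
          (integrable_finsetSum _ fun i _ => hterm i), integral_indicator_const _ hfar,
          measureReal_univ_pi_const, measureReal_compl measurableSet_closedBall,
          probReal_univ, integral_finsetSum _ fun i _ => hterm i]
        simp_rw [integral_pi_indicator_forall_le μ hdist hf]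
        simp [mul_comm]
    _ ≤ B * (1 - μ.real (closedBall x δ)) ^ (n + 2) + ∑ _i : Fin (n + 2), c / (n + 2) := by
        gcongr
    _ = B * (1 - μ.real (closedBall x δ)) ^ (n + 2) + c := by
        simp only [Finset.sum_const, Finset.card_univ, Fintype.card_fin, nsmul_eq_mul]
        field_simp
        push_cast
        ring

lemma exists_forall_setIntegral_closedBall_le {𝒳 : Type*} [MetricSpace 𝒳] [MeasurableSpace 𝒳]
    [BorelSpace 𝒳] {μ : Measure 𝒳} [IsFiniteMeasure μ] {x : 𝒳}
    (hsupp : ∀ r > (0 : ℝ), 0 < μ (closedBall x r)) {g : 𝒳 → ℝ} (hgx : g x = 0)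
    {K R : ℝ} (hK : 0 ≤ K) (hR : 0 < R)
    (hcond : ∀ r ∈ Set.Ioo (0 : ℝ) R, μ.real (sphere x r) ≤ K * μ.real (ball x r))
    (hLeb : Tendsto (fun r => (∫ y in closedBall x r, g y ∂μ) / μ.real (closedBall x r))
      (𝓝[>] 0) (𝓝 0))
    {c : ℝ} (hc : 0 < c) :
    ∃ δ > 0, ∀ r ∈ Set.Icc 0 δ, ∫ y in closedBall x r, g y ∂μ ≤ c * μ.real (ball x r) := by
  have hK1 : 0 < 1 + K := by linarith
  obtain ⟨δ, hδ, hsub⟩ := mem_nhdsGT_iff_exists_Ioc_subset.1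
    (hLeb.eventually (gt_mem_nhds (div_pos hc hK1)))
  refine ⟨min δ (R / 2), lt_min hδ (half_pos hR), fun r ⟨hr0, hrδ⟩ => ?_⟩
  rcases hr0.eq_or_lt with rfl | hr
  · simp [closedBall_zero, hgx]
  have hpos : 0 < μ.real (closedBall x r) :=
    ENNReal.toReal_pos (hsupp r hr).ne' (measure_ne_top _ _)
  have hlt : (∫ y in closedBall x r, g y ∂μ) / μ.real (closedBall x r) < c / (1 + K) :=
    hsub ⟨hr, hrδ.trans (min_le_left _ _)⟩
  have hclosed : μ.real (closedBall x r) ≤ (1 + K) * μ.real (ball x r) := by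
    have := hcond r ⟨hr, by linarith [min_le_right δ (R / 2)]⟩
    rw [← ball_union_sphere]
    linarith [measureReal_union_le (μ := μ) (ball x r) (sphere x r)]
  calc ∫ y in closedBall x r, g y ∂μ ≤ c / (1 + K) * μ.real (closedBall x r) :=
        ((div_lt_iff₀ hpos).1 hlt).le
    _ ≤ c / (1 + K) * ((1 + K) * μ.real (ball x r)) := by gcongr
    _ = c * μ.real (ball x r) := by field_simp

theorem stmt_7_general
    {𝒳 Ω : Type*} [MetricSpace 𝒳] [MeasurableSpace 𝒳] [BorelSpace 𝒳]
    {mΩ : MeasurableSpace Ω} (P : Measure Ω) [IsProbabilityMeasure P]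
    (X : ℕ → Ω → 𝒳) (μ : Measure 𝒳)
    (hXmeas : ∀ i, Measurable (X i))
    (hXindep : ProbabilityTheory.iIndepFun X P)
    (hXdist : ∀ i, P.map (X i) = μ)
    (x : 𝒳) (hsupp : ∀ r > (0 : ℝ), 0 < μ (Metric.closedBall x r))
    (η : 𝒳 → ℝ) (hηmeas : Measurable η) (C : ℝ) (hηbdd : ∀ y, |η y| ≤ C)
    (NN : ℕ → Ω → 𝒳)
    (hNN : ∀ m, 1 ≤ m → ∀ ω, (∃ i < m, NN m ω = X i ω) ∧
      ∀ j < m, dist x (NN m ω) ≤ dist x (X j ω))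
    (K : ℝ) (hK : 0 ≤ K) (R : ℝ) (hR : 0 < R)
    (hcond : ∀ r ∈ Set.Ioo (0 : ℝ) R,
      (μ (Metric.sphere x r)).toReal ≤ K * (μ (Metric.ball x r)).toReal)
    (hLeb : Tendsto
      (fun r : ℝ =>
        (∫ y in Metric.closedBall x r, |η y - η x| ∂μ) /
          (μ (Metric.closedBall x r)).toReal)
      (𝓝[>] 0) (𝓝 0)) :
    Tendsto (fun m : ℕ => ∫ ω, |η (NN m ω) - η x| ∂P) atTop (𝓝 0) := by
  have : IsProbabilityMeasure μ :=
    hXdist 0 ▸ Measure.isProbabilityMeasure_map (hXmeas 0).aemeasurable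
  have hgB : ∀ y, |η y - η x| ≤ 2 * C := fun y =>
    (abs_sub _ _).trans (by linarith [hηbdd y, hηbdd x])
  refine tendsto_order.2 ⟨fun a ha => .of_forall fun m =>
    ha.trans_le (integral_nonneg fun _ => abs_nonneg _), fun ε hε => ?_⟩
  obtain ⟨δ, hδ, hG⟩ := exists_forall_setIntegral_closedBall_le hsupp (by simp) hK hR hcond hLeb
    (half_pos hε)
  have ha : 0 < μ.real (closedBall x δ) := ENNReal.toReal_pos (hsupp δ hδ).ne' (measure_ne_top _ _)
  have hpow : Tendsto (fun m : ℕ => 2 * C * (1 - μ.real (closedBall x δ)) ^ m) atTop (𝓝 0) := by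
    simpa using (tendsto_pow_atTop_nhds_zero_of_lt_one
      (sub_nonneg.2 measureReal_le_one) (by linarith)).const_mul (2 * C)
  filter_upwards [hpow.eventually (gt_mem_nhds (half_pos hε)), eventually_ge_atTop 2]
    with m hm hm2
  obtain ⟨n, rfl⟩ := Nat.exists_eq_add_of_le' hm2
  have := integral_nearest_le hXmeas hXindep hXdist (g := fun y => |η y - η x|)
    (hηmeas.sub measurable_const).abs
    (fun _ => abs_nonneg _) hgB hδ.le (half_pos hε).le hG (hNN (n + 2) (by omega))
  linarith

/-- **Theorem (Lebesgue ⟹ NN under the relaxed measure-continuity condition).**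
In the nearest-neighbor setting with the non-triviality assumptions, if there exist
`K ≥ 0` and `R > 0` with `μ(S_r) ≤ K · μ(B_r)` for all `r ∈ (0, R)`, and `x` is a
Lebesgue point for `η` with respect to the common distribution `μ`, then
`𝔼[|η(NN m) − η(x)|] → 0` as `m → ∞`. -/
theorem stmt_7
    {𝒳 Ω : Type*} [MetricSpace 𝒳] [MeasurableSpace 𝒳] [BorelSpace 𝒳]
    {mΩ : MeasurableSpace Ω} (P : Measure Ω) [IsProbabilityMeasure P]
    (X : ℕ → Ω → 𝒳) (μ : Measure 𝒳)
    (hXmeas : ∀ i, Measurable (X i))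
    (hXindep : ProbabilityTheory.iIndepFun X P)
    (hXdist : ∀ i, P.map (X i) = μ)
    (x : 𝒳) (hsupp : ∀ r > (0 : ℝ), 0 < μ (Metric.closedBall x r))
    (η : 𝒳 → ℝ) (hηmeas : Measurable η) (C : ℝ) (hηbdd : ∀ y, |η y| ≤ C)
    (NN : ℕ → Ω → 𝒳)
    (hNNmeas : ∀ m, 1 ≤ m → Measurable (NN m))
    (hNN : ∀ m, 1 ≤ m → ∀ ω, (∃ i < m, NN m ω = X i ω) ∧
      ∀ j < m, dist x (NN m ω) ≤ dist x (X j ω))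
    (hatom : μ {x} = 0)
    (hnontriv : ∀ r > (0 : ℝ), 0 < ∫ y in Metric.closedBall x r, |η y - η x| ∂μ)
    (K : ℝ) (hK : 0 ≤ K) (R : ℝ) (hR : 0 < R)
    (hcond : ∀ r ∈ Set.Ioo (0 : ℝ) R,
      (μ (Metric.sphere x r)).toReal ≤ K * (μ (Metric.ball x r)).toReal)
    (hLeb : Tendsto
      (fun r : ℝ =>
        (∫ y in Metric.closedBall x r, |η y - η x| ∂μ) /
          (μ (Metric.closedBall x r)).toReal)
      (𝓝[>] 0) (𝓝 0)) :
    Tendsto (fun m : ℕ => ∫ ω, |η (NN m ω) - η x| ∂P) atTop (𝓝 0) :=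
  stmt_7_general (mΩ := mΩ) P X μ hXmeas hXindep hXdist x hsupp η hηmeas C hηbdd NN hNN K hK R hR
    hcond hLeb
end

section
/- For every r > 0 the following are equivalent: (1) ℙ_X(S_r) > 0; (2) there exists m ∈ ℕ such that ℙ(X^x_m ∈ S_r) > 0; (3) for all m ∈ ℕ, ℙ(X^x_m ∈ S_r) > 0. Moreover, for all m ∈ ℕ, m·ℙ_X(S_r) ≥ ℙ(X^x_m ∈ S_r) ≥ (ℙ_X(S_r))^m. -/
open MeasureTheory Filter Topology

/-! The nearest neighbour is always one of `X₀, …, X_{m-1}`. Hence `{X^x_m ∈ S_r}` lies in the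
union of the events `{X_i ∈ S_r}`, giving the upper bound by a union bound, and contains their
intersection, giving the lower bound by independence. Both bounds show that `ℙ(X^x_m ∈ S_r)` and
`ℙ_X(S_r)` vanish together. -/

open Finset ProbabilityTheory

section Selector

variable {Ω α : Type*} {mΩ : MeasurableSpace Ω} {P : Measure Ω} {X : ℕ → Ω → α} {f : Ω → α}
  {m : ℕ}

lemma measure_preimage_le_sum_of_forall_exists_eq (hf : ∀ ω, ∃ i < m, f ω = X i ω)
    (s : Set α) : P (f ⁻¹' s) ≤ ∑ i ∈ range m, P (X i ⁻¹' s) := by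
  have hsub : f ⁻¹' s ⊆ ⋃ i ∈ range m, X i ⁻¹' s := by
    intro ω hω
    obtain ⟨i, hi, heq⟩ := hf ω
    exact Set.mem_biUnion (mem_range.2 hi) (show X i ω ∈ s from heq ▸ hω)
  exact (measure_mono hsub).trans (measure_biUnion_finset_le _ _)

lemma prod_measure_preimage_le_of_forall_exists_eq [MeasurableSpace α] (hX : iIndepFun X P)
    (hf : ∀ ω, ∃ i < m, f ω = X i ω) {s : Set α} (hs : MeasurableSet s) :
    ∏ i ∈ range m, P (X i ⁻¹' s) ≤ P (f ⁻¹' s) := by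
  have hsub : ⋂ i ∈ range m, X i ⁻¹' s ⊆ f ⁻¹' s := by
    intro ω hω
    obtain ⟨i, hi, heq⟩ := hf ω
    exact (show f ω ∈ s from heq ▸ Set.mem_iInter₂.1 hω i (mem_range.2 hi))
  rw [← iIndepFun_iff_measure_inter_preimage_eq_mul.1 hX (range m) (sets := fun _ => s)
    (fun _ _ => hs)]
  exact measure_mono hsub

variable [MeasurableSpace α] {μ : Measure α} {s : Set α}

lemma measure_preimage_eq_of_map_eq {Y : Ω → α} (hY : Measurable Y) (h : P.map Y = μ)
    (hs : MeasurableSet s) : P (Y ⁻¹' s) = μ s := by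
  rw [← h, Measure.map_apply hY hs]

lemma measure_preimage_le_mul_of_forall_exists_eq (hXmeas : ∀ i, Measurable (X i))
    (hXdist : ∀ i, P.map (X i) = μ) (hf : ∀ ω, ∃ i < m, f ω = X i ω) (hs : MeasurableSet s) :
    P (f ⁻¹' s) ≤ m * μ s := by
  have hpre i : P (X i ⁻¹' s) = μ s := measure_preimage_eq_of_map_eq (hXmeas i) (hXdist i) hs
  simpa [hpre] using measure_preimage_le_sum_of_forall_exists_eq (P := P) hf s

lemma pow_le_measure_preimage_of_forall_exists_eq (hXmeas : ∀ i, Measurable (X i))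
    (hX : iIndepFun X P) (hXdist : ∀ i, P.map (X i) = μ) (hf : ∀ ω, ∃ i < m, f ω = X i ω)
    (hs : MeasurableSet s) : μ s ^ m ≤ P (f ⁻¹' s) := by
  have hpre i : P (X i ⁻¹' s) = μ s := measure_preimage_eq_of_map_eq (hXmeas i) (hXdist i) hs
  simpa [hpre] using prod_measure_preimage_le_of_forall_exists_eq hX hf hs

end Selector

lemma ENNReal.pos_iff_pos_of_le_mul_of_pow_le {a b : ENNReal} {m : ℕ} (hup : a ≤ m * b)
    (hlow : b ^ m ≤ a) : 0 < b ↔ 0 < a := by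
  refine ⟨fun hb => (ENNReal.pow_pos hb m).trans_le hlow, fun ha => pos_of_ne_zero ?_⟩
  rintro rfl
  simp_all

theorem stmt_8_general
    {𝒳 Ω : Type*} [MetricSpace 𝒳] [MeasurableSpace 𝒳] [BorelSpace 𝒳]
    {mΩ : MeasurableSpace Ω} (P : Measure Ω)
    (X : ℕ → Ω → 𝒳) (μ : Measure 𝒳)
    (hXmeas : ∀ i, Measurable (X i))
    (hXindep : ProbabilityTheory.iIndepFun X P)
    (hXdist : ∀ i, P.map (X i) = μ)
    (x : 𝒳)
    (NN : ℕ → Ω → 𝒳)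
    (hNN : ∀ m, 1 ≤ m → ∀ ω, (∃ i < m, NN m ω = X i ω) ∧
      ∀ j < m, dist x (NN m ω) ≤ dist x (X j ω))
    (r : ℝ) :
    ((0 < μ (Metric.sphere x r) ↔
        ∃ m : ℕ, 1 ≤ m ∧ 0 < P {ω | NN m ω ∈ Metric.sphere x r}) ∧
      (0 < μ (Metric.sphere x r) ↔
        ∀ m : ℕ, 1 ≤ m → 0 < P {ω | NN m ω ∈ Metric.sphere x r})) ∧
    (∀ m : ℕ, 1 ≤ m →
      (P {ω | NN m ω ∈ Metric.sphere x r} ≤ (m : ENNReal) * μ (Metric.sphere x r) ∧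
        (μ (Metric.sphere x r)) ^ m ≤ P {ω | NN m ω ∈ Metric.sphere x r})) := by
  have hS : MeasurableSet (Metric.sphere x r) := Metric.isClosed_sphere.measurableSet
  have bounds : ∀ m : ℕ, 1 ≤ m →
      (P {ω | NN m ω ∈ Metric.sphere x r} ≤ (m : ENNReal) * μ (Metric.sphere x r) ∧
        (μ (Metric.sphere x r)) ^ m ≤ P {ω | NN m ω ∈ Metric.sphere x r}) := fun m hm =>
    ⟨measure_preimage_le_mul_of_forall_exists_eq hXmeas hXdist (fun ω => (hNN m hm ω).1) hS,
      pow_le_measure_preimage_of_forall_exists_eq hXmeas hXindep hXdist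
        (fun ω => (hNN m hm ω).1) hS⟩
  have hpos : ∀ m : ℕ, 1 ≤ m →
      (0 < μ (Metric.sphere x r) ↔ 0 < P {ω | NN m ω ∈ Metric.sphere x r}) := fun m hm =>
    ENNReal.pos_iff_pos_of_le_mul_of_pow_le (bounds m hm).1 (bounds m hm).2
  exact ⟨⟨⟨fun h => ⟨1, le_rfl, (hpos 1 le_rfl).1 h⟩, fun ⟨m, hm, h⟩ => (hpos m hm).2 h⟩,
    ⟨fun h m hm => (hpos m hm).1 h, fun h => (hpos 1 le_rfl).2 (h 1 le_rfl)⟩⟩, bounds⟩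

/-- **Lemma (positivity of sphere probabilities).**
In the nearest-neighbor setting, for every `r > 0` the following are equivalent:
(1) `μ(S_r) > 0`; (2) `ℙ(NN m ∈ S_r) > 0` for some `m ≥ 1`;
(3) `ℙ(NN m ∈ S_r) > 0` for every `m ≥ 1`. Moreover, for every `m ≥ 1`,
`m·μ(S_r) ≥ ℙ(NN m ∈ S_r) ≥ (μ(S_r))^m`. -/
theorem stmt_8
    {𝒳 Ω : Type*} [MetricSpace 𝒳] [MeasurableSpace 𝒳] [BorelSpace 𝒳]
    {mΩ : MeasurableSpace Ω} (P : Measure Ω) [IsProbabilityMeasure P]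
    (X : ℕ → Ω → 𝒳) (μ : Measure 𝒳)
    (hXmeas : ∀ i, Measurable (X i))
    (hXindep : ProbabilityTheory.iIndepFun X P)
    (hXdist : ∀ i, P.map (X i) = μ)
    (x : 𝒳) (hsupp : ∀ r > (0 : ℝ), 0 < μ (Metric.closedBall x r))
    (NN : ℕ → Ω → 𝒳)
    (hNNmeas : ∀ m, 1 ≤ m → Measurable (NN m))
    (hNN : ∀ m, 1 ≤ m → ∀ ω, (∃ i < m, NN m ω = X i ω) ∧
      ∀ j < m, dist x (NN m ω) ≤ dist x (X j ω))
    (r : ℝ) (hr : 0 < r) :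
    ((0 < μ (Metric.sphere x r) ↔
        ∃ m : ℕ, 1 ≤ m ∧ 0 < P {ω | NN m ω ∈ Metric.sphere x r}) ∧
      (0 < μ (Metric.sphere x r) ↔
        ∀ m : ℕ, 1 ≤ m → 0 < P {ω | NN m ω ∈ Metric.sphere x r})) ∧
    (∀ m : ℕ, 1 ≤ m →
      (P {ω | NN m ω ∈ Metric.sphere x r} ≤ (m : ENNReal) * μ (Metric.sphere x r) ∧
        (μ (Metric.sphere x r)) ^ m ≤ P {ω | NN m ω ∈ Metric.sphere x r})) :=
  stmt_8_general (mΩ := mΩ) P X μ hXmeas hXindep hXdist x NN hNN r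
end

section
/- Let (ψ_m, Θ_m)_{m∈ℕ} be an ISIMIN and, for each m ∈ ℕ, let X^x_m be the nearest neighbor of x among X₁, …, X_m according to (ψ_m, Θ_m). If r > 0 is such that ℙ_X(S_r) > 0, then for every Borel subset A of (𝒳, d) and every m ∈ ℕ, ℙ(X^x_m ∈ A ∣ X^x_m ∈ S_r) = ℙ(X ∈ A ∣ X ∈ S_r). In particular, for every bounded measurable η : 𝒳 → ℝ, 𝔼[|η(X^x_m) − η(x)| ∣ X^x_m ∈ S_r] = 𝔼[|η(X) − η(x)| ∣ X ∈ S_r]. -/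
/-!
For `k < m`, let `G k` be the index the selector would return if `X k` were moved onto the sphere
`S_r`, i.e. with the `k`-th distance replaced by `r`. On `{X k ∈ S_r}` the selected index is `G k`,
and `G k` is a function of `Θ` and of the other sample points, hence independent of `X k`.
Summing over `k` gives `ℙ(X^x_m ∈ B ∩ S_r) = c · μ(B ∩ S_r)` with `c = ∑ₖ ℙ(G k = k)`, and `c > 0`
because all sample points lie on `S_r` with positive probability. So the law of `X^x_m` restricted
to `S_r` is proportional to `μ` restricted to `S_r`, and the two conditional laws agree.
-/

open MeasureTheory ProbabilityTheory
open scoped ENNReal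

section Independence

variable {Ω β γ δ ε : Type*} {mΩ : MeasurableSpace Ω} [MeasurableSpace β] [MeasurableSpace γ]
  [MeasurableSpace δ] [MeasurableSpace ε] {P : Measure Ω}

theorem ProbabilityTheory.IndepFun.prodMk_comp_of_indepFun_comp {T : Ω → β} {V : Ω → γ}
    {f : γ → δ} {g : γ → ε} [IsProbabilityMeasure P] (hT : Measurable T) (hV : Measurable V)
    (hf : Measurable f) (hg : Measurable g) (hTV : IndepFun T V P)
    (hfg : IndepFun (f ∘ V) (g ∘ V) P) :
    IndepFun (fun ω => (T ω, f (V ω))) (fun ω => g (V ω)) P := by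
  have hTf : Measurable fun ω => (T ω, f (V ω)) := hT.prodMk (hf.comp hV)
  have hgV : Measurable fun ω => g (V ω) := hg.comp hV
  rw [indepFun_iff_map_prod_eq_prod_map_map hTf.aemeasurable hgV.aemeasurable]
  refine Measure.ext_prod₃' fun {s t u} hs ht hu => ?_
  rw [Measure.map_apply (hTf.prodMk hgV) ((hs.prod ht).prod hu), Measure.prod_prod,
    Measure.map_apply hTf (hs.prod ht), Measure.map_apply hgV hu]
  have hsets : (fun ω => ((T ω, f (V ω)), g (V ω))) ⁻¹' ((s ×ˢ t) ×ˢ u)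
      = T ⁻¹' s ∩ V ⁻¹' (f ⁻¹' t ∩ g ⁻¹' u) := by
    ext ω; simp [and_assoc]
  rw [hsets, hTV.measure_inter_preimage_eq_mul _ _ hs ((hf ht).inter (hg hu))]
  change _ = P (T ⁻¹' s ∩ V ⁻¹' (f ⁻¹' t)) * P ((g ∘ V) ⁻¹' u)
  rw [hTV.measure_inter_preimage_eq_mul _ _ hs (hf ht), mul_assoc]
  exact congrArg _ (hfg.measure_inter_preimage_eq_mul t u ht hu)

theorem ProbabilityTheory.iIndepFun.indepFun_update {ι : Type*} [Fintype ι] [DecidableEq ι]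
    {Y : ι → Ω → β} (hY : iIndepFun Y P) (hmeas : ∀ i, Measurable (Y i)) (k : ι) (b : β) :
    IndepFun (fun ω => Function.update (fun i => Y i ω) k b) (Y k) P := by
  let φ : (({k}ᶜ : Finset ι) → β) → ι → β := fun v i =>
    if h : i = k then b else v ⟨i, by simpa using h⟩
  have hφ : Measurable φ := measurable_pi_lambda _ fun i => by
    by_cases h : i = k
    · simp only [φ, dif_pos h]; exact measurable_const
    · simp only [φ, dif_neg h]; exact measurable_pi_apply _
  have hupdate : (fun ω => Function.update (fun i => Y i ω) k b)
      = φ ∘ fun ω (i : ({k}ᶜ : Finset ι)) => Y i ω := by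
    funext ω i
    by_cases h : i = k
    · subst h; simp [φ]
    · simp [φ, h]
  rw [hupdate]
  exact (hY.indepFun_finset {k}ᶜ {k} disjoint_compl_left hmeas).comp hφ
    (measurable_pi_apply ⟨k, Finset.mem_singleton_self k⟩)

end Independence

section Cond

variable {α : Type*} {mα : MeasurableSpace α} {μ ν : Measure α} {s : Set α}

theorem ProbabilityTheory.cond_eq_of_restrict_eq_smul {c : ℝ≥0∞}
    (h : ν.restrict s = c • μ.restrict s) (hc₀ : c ≠ 0) (hc : c ≠ ∞) : ν[|s] = μ[|s] := by
  have hνs : ν s = c * μ s := by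
    rw [← ν.restrict_apply_self s, h, Measure.smul_apply, Measure.restrict_apply_self, smul_eq_mul]
  rw [cond, cond, h, hνs, smul_smul, ENNReal.mul_inv (Or.inl hc₀) (Or.inl hc), mul_right_comm,
    ENNReal.inv_mul_cancel hc₀ hc, one_mul]

theorem ProbabilityTheory.cond_apply_eq_div (hs : MeasurableSet s) (μ : Measure α) (t : Set α) :
    μ[t|s] = μ (t ∩ s) / μ s := by
  rw [cond_apply hs, Set.inter_comm, ENNReal.div_eq_inv_mul]

theorem ProbabilityTheory.integral_cond_eq_div (μ : Measure α) (s : Set α) (f : α → ℝ) :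
    ∫ y, f y ∂μ[|s] = (∫ y in s, f y ∂μ) / (μ s).toReal := by
  rw [cond, integral_smul_measure, ENNReal.toReal_inv, smul_eq_mul, div_eq_inv_mul]

end Cond

section Selection

variable {Ω ι 𝒳 : Type*} {mΩ : MeasurableSpace Ω} [MeasurableSpace 𝒳] {P : Measure Ω}
  {μ : Measure 𝒳} {X : ι → Ω → 𝒳} {I : Ω → ι} {s : Finset ι} {S : Set 𝒳}

theorem measure_comp_index_preimage_ne_zero (hX : ∀ i, Measurable (X i))
    (hXindep : iIndepFun X P) (hXμ : ∀ i, P.map (X i) = μ) (hIs : ∀ ω, I ω ∈ s)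
    (hS : MeasurableSet S) (hμS : μ S ≠ 0) : P ((fun ω => X (I ω) ω) ⁻¹' S) ≠ 0 := by
  have hXS : ∀ k, P (X k ⁻¹' S) = μ S := fun k => by rw [← hXμ k, Measure.map_apply (hX k) hS]
  have hall : P (⋂ k ∈ s, X k ⁻¹' S) = μ S ^ s.card := by
    rw [hXindep.measure_inter_preimage_eq_mul s (sets := fun _ => S) fun _ _ => hS]
    simp only [hXS, Finset.prod_const]
  have hsub : (⋂ k ∈ s, X k ⁻¹' S) ⊆ (fun ω => X (I ω) ω) ⁻¹' S :=
    fun ω hω => Set.mem_iInter₂.1 hω (I ω) (hIs ω)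
  exact fun h => pow_ne_zero _ hμS (hall ▸ measure_mono_null hsub h)

variable [MeasurableSpace ι] [MeasurableSingletonClass ι] [Countable ι]

theorem measurable_comp_index (hX : ∀ i, Measurable (X i)) (hI : Measurable I) :
    Measurable fun ω => X (I ω) ω :=
  (measurable_from_prod_countable_right (f := fun p : ι × Ω => X p.1 p.2) hX).comp
    (hI.prodMk measurable_id)

theorem map_comp_index_restrict_eq_smul (hX : ∀ i, Measurable (X i))
    (hI : Measurable I) (hIs : ∀ ω, I ω ∈ s) (hXμ : ∀ i, P.map (X i) = μ)
    (hS : MeasurableSet S) {G : ι → Ω → ι} (hG : ∀ k, Measurable (G k))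
    (hIG : ∀ k ∈ s, ∀ ω, X k ω ∈ S → I ω = G k ω) (hGX : ∀ k ∈ s, IndepFun (G k) (X k) P) :
    (P.map fun ω => X (I ω) ω).restrict S = (∑ k ∈ s, P (G k ⁻¹' {k})) • μ.restrict S := by
  ext B hB
  have hBS := hB.inter hS
  have hpre : (fun ω => X (I ω) ω) ⁻¹' (B ∩ S) = ⋃ k ∈ s, G k ⁻¹' {k} ∩ X k ⁻¹' (B ∩ S) := by
    ext ω
    simp only [Set.mem_preimage, Set.mem_iUnion, Set.mem_inter_iff, Set.mem_singleton_iff,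
      exists_prop]
    constructor
    · intro h
      exact ⟨I ω, hIs ω, (hIG _ (hIs ω) ω h.2).symm, h⟩
    · rintro ⟨k, hk, hGk, hXk⟩
      rwa [hIG k hk ω hXk.2, hGk]
  have hdisj : Set.PairwiseDisjoint (s : Set ι) fun k => G k ⁻¹' {k} ∩ X k ⁻¹' (B ∩ S) := by
    intro k hk l hl hkl
    refine Set.disjoint_left.2 fun ω ⟨hGk, hXk⟩ ⟨hGl, hXl⟩ => hkl ?_
    exact ((hIG k hk ω hXk.2).trans hGk).symm.trans ((hIG l hl ω hXl.2).trans hGl)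
  rw [Measure.restrict_apply hB, Measure.smul_apply, Measure.restrict_apply hB, smul_eq_mul,
    Measure.map_apply (measurable_comp_index hX hI) hBS, hpre,
    measure_biUnion_finset hdisj fun k _ => (hG k (measurableSet_singleton k)).inter (hX k hBS),
    Finset.sum_mul]
  refine Finset.sum_congr rfl fun k hk => ?_
  rw [(hGX k hk).measure_inter_preimage_eq_mul _ _ (measurableSet_singleton k) hBS, ← hXμ k,
    Measure.map_apply (hX k) hBS]

end Selection

section NearestNeighbor

variable {𝒳 : Type*} [PseudoMetricSpace 𝒳] {m : ℕ}

def truncDist (x : 𝒳) (v : Fin m → 𝒳) : ℕ → ℝ :=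
  fun i => if h : i < m then dist x (v ⟨i, h⟩) else 0

theorem update_truncDist_update (x y : 𝒳) (v : Fin m → 𝒳) (k : Fin m) (r : ℝ) :
    Function.update (truncDist x (Function.update v k y)) k r =
      Function.update (truncDist x v) k r := by
  funext i
  by_cases hik : i = k
  · simp [hik]
  · by_cases hi : i < m
    · have : (⟨i, hi⟩ : Fin m) ≠ k := fun h => hik (by rw [← h])
      simp [truncDist, hik, hi, this]
    · simp [truncDist, hik, hi]

variable {Ω Z : Type*} {mΩ : MeasurableSpace Ω} [MeasurableSpace 𝒳] [OpensMeasurableSpace 𝒳]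
  [MeasurableSpace Z] {P : Measure Ω} {X : ℕ → Ω → 𝒳} {Θ : Ω → Z} {ψ : (ℕ → ℝ) × Z → ℕ}

theorem measurable_truncDist (x : 𝒳) : Measurable (truncDist x : (Fin m → 𝒳) → ℕ → ℝ) :=
  measurable_pi_lambda _ fun i => by
    by_cases h : i < m
    · simp only [truncDist, dif_pos h]
      exact (continuous_const.dist continuous_id).measurable.comp (measurable_pi_apply _)
    · simp only [truncDist, dif_neg h]
      exact measurable_const

theorem measurable_selectedIndex (hX : ∀ i, Measurable (X i)) (hΘ : Measurable Θ)
    (hψ : Measurable ψ) (x : 𝒳) : Measurable fun ω => ψ (fun i => dist x (X i ω), Θ ω) :=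
  hψ.comp ((measurable_pi_lambda _ fun i =>
    (continuous_const.dist continuous_id).measurable.comp (hX i)).prodMk hΘ)

theorem indepFun_update_truncDist [IsProbabilityMeasure P] (hX : ∀ i, Measurable (X i))
    (hXindep : iIndepFun X P) (hΘ : Measurable Θ)
    (hΘX : IndepFun Θ (fun ω (i : Fin m) => X i ω) P) (hψ : Measurable ψ) (x : 𝒳) (r : ℝ)
    (k : Fin m) :
    IndepFun (fun ω => ψ (Function.update (truncDist x fun i : Fin m => X i ω) k r, Θ ω))
      (X k) P := by
  have hΘXk : IndepFun (fun ω => (Θ ω, Function.update (fun i : Fin m => X i ω) k x))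
      (fun ω => X k ω) P :=
    hΘX.prodMk_comp_of_indepFun_comp hΘ
      (measurable_pi_lambda (fun ω (i : Fin m) => X i ω) fun i => hX i)
      measurable_update_left (measurable_pi_apply k)
      ((hXindep.precomp Fin.val_injective).indepFun_update (fun i => hX i) k x)
  have hF : Measurable fun p : Z × (Fin m → 𝒳) =>
      ψ (Function.update (truncDist x p.2) k r, p.1) :=
    hψ.comp ((measurable_update_left.comp ((measurable_truncDist x).comp measurable_snd)).prodMk
      measurable_fst)
  simpa [Function.comp_def, update_truncDist_update] using hΘXk.comp hF measurable_id

theorem cond_map_selected_sphere_eq [IsProbabilityMeasure P] {μ : Measure 𝒳}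
    (hX : ∀ i, Measurable (X i)) (hXindep : iIndepFun X P) (hXμ : ∀ i, P.map (X i) = μ)
    (hΘ : Measurable Θ) (hΘX : IndepFun Θ (fun ω (i : Fin m) => X i ω) P) (hψ : Measurable ψ)
    (hψdep : ∀ f g : ℕ → ℝ, ∀ z, (∀ i < m, f i = g i) → ψ (f, z) = ψ (g, z))
    (hψlt : ∀ f z, (∀ i, 0 ≤ f i) → ψ (f, z) < m) (x : 𝒳) {r : ℝ}
    (hμr : μ (Metric.sphere x r) ≠ 0) :
    (P.map fun ω => X (ψ (fun i => dist x (X i ω), Θ ω)) ω)[|Metric.sphere x r] =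
      μ[|Metric.sphere x r] := by
  have hS : MeasurableSet (Metric.sphere x r) := Metric.isClosed_sphere.measurableSet
  set I : Ω → ℕ := fun ω => ψ (fun i => dist x (X i ω), Θ ω)
  have hI : Measurable I := measurable_selectedIndex hX hΘ hψ x
  have hIs : ∀ ω, I ω ∈ Finset.range m :=
    fun ω => Finset.mem_range.2 (hψlt _ _ fun _ => dist_nonneg)
  set G : ℕ → Ω → ℕ :=
    fun k ω => ψ (Function.update (truncDist x fun i : Fin m => X i ω) k r, Θ ω)
  have hG : ∀ k, Measurable (G k) := fun k =>
    hψ.comp ((measurable_update_left.comp ((measurable_truncDist x).comp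
      (measurable_pi_lambda _ fun i => hX i))).prodMk hΘ)
  have hIG : ∀ k ∈ Finset.range m, ∀ ω, X k ω ∈ Metric.sphere x r → I ω = G k ω := by
    intro k hk ω hXk
    refine hψdep _ _ _ fun i hi => ?_
    by_cases hik : i = k
    · subst hik
      simpa [dist_comm] using hXk
    · simp [truncDist, hik, hi]
  have hGX : ∀ k ∈ Finset.range m, IndepFun (G k) (X k) P := fun k hk =>
    indepFun_update_truncDist hX hXindep hΘ hΘX hψ x r ⟨k, Finset.mem_range.1 hk⟩
  have hrestrict := map_comp_index_restrict_eq_smul hX hI hIs hXμ hS hG hIG hGX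
  refine cond_eq_of_restrict_eq_smul hrestrict (fun hc => ?_)
    (ENNReal.sum_ne_top.2 fun _ _ => measure_ne_top _ _)
  apply measure_comp_index_preimage_ne_zero hX hXindep hXμ hIs hS hμr
  rw [← Measure.map_apply (measurable_comp_index hX hI) hS, ← Measure.restrict_apply_self,
    hrestrict, hc, zero_smul, Measure.coe_zero, Pi.zero_apply]

end NearestNeighbor

theorem stmt_10_general
    {𝒳 Ω : Type*} [MetricSpace 𝒳] [MeasurableSpace 𝒳] [BorelSpace 𝒳]
    {mΩ : MeasurableSpace Ω} (P : Measure Ω) [IsProbabilityMeasure P]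
    (X : ℕ → Ω → 𝒳) (μ : Measure 𝒳)
    (hXmeas : ∀ i, Measurable (X i))
    (hXindep : ProbabilityTheory.iIndepFun X P)
    (hXdist : ∀ i, P.map (X i) = μ)
    (x : 𝒳)
    (𝒵 : ℕ → Type*) [∀ m, MeasurableSpace (𝒵 m)]
    (Θ : ∀ m : ℕ, Ω → 𝒵 m) (hΘmeas : ∀ m, Measurable (Θ m))
    (hΘindep : ∀ m : ℕ,
      ProbabilityTheory.IndepFun (Θ m) (fun ω => fun i : Fin m => X (i : ℕ) ω) P)
    (ψ : ∀ m : ℕ, ((ℕ → ℝ) × 𝒵 m) → ℕ)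
    (hψmeas : ∀ m, Measurable (ψ m))
    (hψdep : ∀ m : ℕ, ∀ f g : ℕ → ℝ, ∀ z : 𝒵 m,
      (∀ i < m, f i = g i) → ψ m (f, z) = ψ m (g, z))
    (hψmin : ∀ m : ℕ, 1 ≤ m → ∀ (f : ℕ → ℝ) (z : 𝒵 m), (∀ i, 0 ≤ f i) →
      ψ m (f, z) < m ∧ ∀ j < m, f (ψ m (f, z)) ≤ f j)
    (NN : ℕ → Ω → 𝒳)
    (hNNdef : ∀ (m : ℕ) (ω : Ω),
      NN m ω = X (ψ m (fun i => dist x (X i ω), Θ m ω)) ω)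
    (r : ℝ) (hrpos : 0 < μ (Metric.sphere x r)) :
    (∀ m : ℕ, 1 ≤ m → ∀ A : Set 𝒳, MeasurableSet A →
      P {ω | NN m ω ∈ A ∩ Metric.sphere x r} / P {ω | NN m ω ∈ Metric.sphere x r} =
        μ (A ∩ Metric.sphere x r) / μ (Metric.sphere x r)) ∧
    (∀ m : ℕ, 1 ≤ m → ∀ η : 𝒳 → ℝ, Measurable η → (∃ C : ℝ, ∀ y, |η y| ≤ C) →
      (∫ ω in {ω | NN m ω ∈ Metric.sphere x r}, |η (NN m ω) - η x| ∂P) /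
          (P {ω | NN m ω ∈ Metric.sphere x r}).toReal =
        (∫ y in Metric.sphere x r, |η y - η x| ∂μ) /
          (μ (Metric.sphere x r)).toReal) := by
  have hS : MeasurableSet (Metric.sphere x r) := Metric.isClosed_sphere.measurableSet
  have hNN : ∀ m, NN m = fun ω => X (ψ m (fun i => dist x (X i ω), Θ m ω)) ω :=
    fun m => funext (hNNdef m)
  have hNNmeas : ∀ m, Measurable (NN m) := fun m => hNN m ▸
    measurable_comp_index hXmeas (measurable_selectedIndex hXmeas (hΘmeas m) (hψmeas m) x)
  have hcond : ∀ m, 1 ≤ m → (P.map (NN m))[|Metric.sphere x r] = μ[|Metric.sphere x r] :=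
    fun m hm => hNN m ▸ cond_map_selected_sphere_eq hXmeas hXindep hXdist (hΘmeas m)
      (hΘindep m) (hψmeas m) (hψdep m) (fun f z hf => (hψmin m hm f z hf).1) x hrpos.ne'
  refine ⟨fun m hm A hA => ?_, fun m hm η hη _ => ?_⟩
  · have h := congrArg (· A) (hcond m hm)
    rwa [cond_apply_eq_div hS, cond_apply_eq_div hS, Measure.map_apply (hNNmeas m) (hA.inter hS),
      Measure.map_apply (hNNmeas m) hS] at h
  · have h := congrArg (fun ν => ∫ y, |η y - η x| ∂ν) (hcond m hm)
    rwa [integral_cond_eq_div, integral_cond_eq_div,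
      setIntegral_map (f := fun y => |η y - η x|) hS
        (hη.sub measurable_const).abs.aestronglyMeasurable (hNNmeas m).aemeasurable,
      Measure.map_apply (hNNmeas m) hS] at h

/-- **Proposition (ISIMINs are unbiased on spheres).**
Setting: `X 0, X 1, …` i.i.d. with common distribution `μ`, `x` in the support of `μ`,
and `(ψ m, Θ m)` an ISIMIN: `Θ m` is independent of `(X 0, …, X (m-1))`, `ψ m` is a
measurable selector, depending only on the first `m` coordinates, of an index of a
minimal entry among the first `m` entries of a nonnegative vector. Let `NN m` be the
nearest neighbor of `x` among `X 0, …, X (m-1)` according to `(ψ m, Θ m)`.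
If `r > 0` satisfies `μ(S_r) > 0`, then for every Borel set `A` and every `m ≥ 1`,
`ℙ(NN m ∈ A ∣ NN m ∈ S_r) = μ(A ∣ S_r)`; in particular for every bounded measurable
`η : 𝒳 → ℝ`, `𝔼[|η(NN m) − η(x)| ∣ NN m ∈ S_r] = 𝔼[|η(X) − η(x)| ∣ X ∈ S_r]`. -/
theorem stmt_10
    {𝒳 Ω : Type*} [MetricSpace 𝒳] [MeasurableSpace 𝒳] [BorelSpace 𝒳]
    {mΩ : MeasurableSpace Ω} (P : Measure Ω) [IsProbabilityMeasure P]
    (X : ℕ → Ω → 𝒳) (μ : Measure 𝒳)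
    (hXmeas : ∀ i, Measurable (X i))
    (hXindep : ProbabilityTheory.iIndepFun X P)
    (hXdist : ∀ i, P.map (X i) = μ)
    (x : 𝒳) (hsupp : ∀ r > (0 : ℝ), 0 < μ (Metric.closedBall x r))
    (𝒵 : ℕ → Type*) [∀ m, MeasurableSpace (𝒵 m)]
    (Θ : ∀ m : ℕ, Ω → 𝒵 m) (hΘmeas : ∀ m, Measurable (Θ m))
    (hΘindep : ∀ m : ℕ,
      ProbabilityTheory.IndepFun (Θ m) (fun ω => fun i : Fin m => X (i : ℕ) ω) P)
    (ψ : ∀ m : ℕ, ((ℕ → ℝ) × 𝒵 m) → ℕ)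
    (hψmeas : ∀ m, Measurable (ψ m))
    (hψdep : ∀ m : ℕ, ∀ f g : ℕ → ℝ, ∀ z : 𝒵 m,
      (∀ i < m, f i = g i) → ψ m (f, z) = ψ m (g, z))
    (hψmin : ∀ m : ℕ, 1 ≤ m → ∀ (f : ℕ → ℝ) (z : 𝒵 m), (∀ i, 0 ≤ f i) →
      ψ m (f, z) < m ∧ ∀ j < m, f (ψ m (f, z)) ≤ f j)
    (NN : ℕ → Ω → 𝒳)
    (hNNdef : ∀ (m : ℕ) (ω : Ω),
      NN m ω = X (ψ m (fun i => dist x (X i ω), Θ m ω)) ω)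
    (r : ℝ) (hr : 0 < r) (hrpos : 0 < μ (Metric.sphere x r)) :
    (∀ m : ℕ, 1 ≤ m → ∀ A : Set 𝒳, MeasurableSet A →
      P {ω | NN m ω ∈ A ∩ Metric.sphere x r} / P {ω | NN m ω ∈ Metric.sphere x r} =
        μ (A ∩ Metric.sphere x r) / μ (Metric.sphere x r)) ∧
    (∀ m : ℕ, 1 ≤ m → ∀ η : 𝒳 → ℝ, Measurable η → (∃ C : ℝ, ∀ y, |η y| ≤ C) →
      (∫ ω in {ω | NN m ω ∈ Metric.sphere x r}, |η (NN m ω) - η x| ∂P) /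
          (P {ω | NN m ω ∈ Metric.sphere x r}).toReal =
        (∫ y in Metric.sphere x r, |η y - η x| ∂μ) /
          (μ (Metric.sphere x r)).toReal) :=
  stmt_10_general (mΩ := mΩ) P X μ hXmeas hXindep hXdist x 𝒵 Θ hΘmeas hΘindep ψ hψmeas hψdep hψmin
    NN hNNdef r hrpos
end
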